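/- arXiv:2509.05313 — 3 statements merged into one kernel-verified Lean document; each statement's English description precedes it below -/
import Mathlib

section
/- Let P = MN be the standard parabolic subgroup of GL(4, ℚ) associated to a composition of 4. Let γ ∈ M and suppose γ = σu = uσ, where σ ∈ M is semisimple and u ∈ M is unipotent (the Jordan decomposition of γ). Let N(σ) = {n ∈ N : nσ = σn}. Then for every function φ : N → ℂ with finite support and every set D ⊆ N containing exactly one element of each right coset N(σ)δ of N(σ) in N, only finitely many of the terms φ(γ⁻¹δ⁻¹γηδ), indexed by δ ∈ D and η ∈ N(σ), are nonzero, and the double sum over δ ∈ D and η ∈ N(σ) of φ(γ⁻¹δ⁻¹γηδ) equals the sum over η ∈ N of φ(η). -/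
/-- `GL(4, ℚ)`, realized as the unit group of the ring of `4 × 4` rational matrices. -/
abbrev GL4 : Type := (Matrix (Fin 4) (Fin 4) ℚ)ˣ

/-- Membership in the Levi subgroup `M` of the standard parabolic subgroup of `GL(4, ℚ)`
attached to a composition `c` of `4`: block diagonal invertible matrices. -/
def IsLevi (c : Composition 4) (g : GL4) : Prop :=
  ∀ i j : Fin 4, c.index i ≠ c.index j → (g : Matrix (Fin 4) (Fin 4) ℚ) i j = 0

/-- Membership in the unipotent radical `N` of the standard parabolic subgroup of `GL(4, ℚ)`
attached to a composition `c` of `4`. -/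
def IsUnipRad (c : Composition 4) (g : GL4) : Prop :=
  (∀ i j : Fin 4, c.index j < c.index i → (g : Matrix (Fin 4) (Fin 4) ℚ) i j = 0) ∧
  (∀ i j : Fin 4, c.index i = c.index j →
    (g : Matrix (Fin 4) (Fin 4) ℚ) i j = if i = j then 1 else 0)

abbrev Mat4 : Type := Matrix (Fin 4) (Fin 4) ℚ

/-- depth-k part of the nilpotent radical -/
def nilrad (c : Composition 4) (k : ℕ) : Submodule ℚ Mat4 where
  carrier := {X | ∀ i j : Fin 4, (c.index j : ℕ) < (c.index i : ℕ) + k → X i j = 0}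
  add_mem' := by intro a b ha hb i j hij; simp [ha i j hij, hb i j hij]
  zero_mem' := by intro i j _; rfl
  smul_mem' := by intro q a ha i j hij; simp [ha i j hij]

lemma nilrad_antitone (c : Composition 4) {k l : ℕ} (h : k ≤ l) :
    nilrad c l ≤ nilrad c k := by
  intro X hX i j hij
  exact hX i j (lt_of_lt_of_le hij (by omega))

lemma mul_mem_nilrad (c : Composition 4) {a b : ℕ} {X Y : Mat4}
    (hX : X ∈ nilrad c a) (hY : Y ∈ nilrad c b) : X * Y ∈ nilrad c (a + b) := by
  intro i j hij
  rw [Matrix.mul_apply]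
  apply Finset.sum_eq_zero
  intro t _
  by_cases h1 : (c.index t : ℕ) < (c.index i : ℕ) + a
  · rw [hX i t h1, zero_mul]
  · rw [hY t j (by omega), mul_zero]

lemma nilrad_four (c : Composition 4) {X : Mat4} (hX : X ∈ nilrad c 4) : X = 0 := by
  ext i j
  refine hX i j ?_
  have := (c.index j).2
  have := c.length_le
  omega

/-- the Levi subalgebra -/
def leviAlg (c : Composition 4) : Subalgebra ℚ Mat4 where
  carrier := {L | ∀ i j : Fin 4, c.index i ≠ c.index j → L i j = 0}
  add_mem' := by intro a b ha hb i j hij; simp [ha i j hij, hb i j hij]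
  mul_mem' := by
    intro a b ha hb i j hij
    rw [Matrix.mul_apply]
    apply Finset.sum_eq_zero
    intro t _
    by_cases h1 : c.index i = c.index t
    · rw [hb t j (h1 ▸ hij), mul_zero]
    · rw [ha i t h1, zero_mul]
  algebraMap_mem' := by
    intro q i j hij
    have : i ≠ j := fun h => hij (h ▸ rfl)
    simp [Matrix.algebraMap_matrix_apply, this]

lemma levi_mul_nilrad (c : Composition 4) {L X : Mat4} (hL : L ∈ leviAlg c) {k : ℕ}
    (hX : X ∈ nilrad c k) : L * X ∈ nilrad c k := by
  intro i j hij
  rw [Matrix.mul_apply]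
  apply Finset.sum_eq_zero
  intro t _
  by_cases h1 : c.index i = c.index t
  · rw [hX t j (by rw [← h1]; exact hij), mul_zero]
  · rw [hL i t h1, zero_mul]

lemma nilrad_mul_levi (c : Composition 4) {L X : Mat4} (hL : L ∈ leviAlg c) {k : ℕ}
    (hX : X ∈ nilrad c k) : X * L ∈ nilrad c k := by
  intro i j hij
  rw [Matrix.mul_apply]
  apply Finset.sum_eq_zero
  intro t _
  by_cases h1 : c.index t = c.index j
  · rw [hX i t (by rw [h1]; exact hij), zero_mul]
  · rw [hL t j h1, mul_zero]

lemma isLevi_iff_mem (c : Composition 4) (g : GL4) :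
    IsLevi c g ↔ (g : Mat4) ∈ leviAlg c := Iff.rfl

/-- inverse of a Levi element is Levi -/
lemma isLevi_inv (c : Composition 4) {g : GL4} (hg : IsLevi c g) : IsLevi c g⁻¹ := by
  classical
  set S := leviAlg c
  have hgS : (g : Mat4) ∈ S := hg
  haveI : FiniteDimensional ℚ S := FiniteDimensional.finiteDimensional_subalgebra _
  set F : S →ₗ[ℚ] S := LinearMap.mulLeft ℚ (⟨(g : Mat4), hgS⟩ : S)
  have hFinj : Function.Injective F := by
    intro a b hab
    have : (g : Mat4) * (a : Mat4) = (g : Mat4) * (b : Mat4) := by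
      have := congrArg (Subtype.val) hab
      simpa [F, LinearMap.mulLeft_apply] using this
    have := congrArg (fun X => ((g⁻¹ : GL4) : Mat4) * X) this
    simp only [← mul_assoc] at this
    rw [show ((g⁻¹ : GL4) : Mat4) * (g : Mat4) = 1 by
      rw [← Units.val_mul, inv_mul_cancel, Units.val_one]] at this
    simp only [one_mul] at this
    exact Subtype.ext this
  have hFsurj : Function.Surjective F := (LinearMap.injective_iff_surjective).mp hFinj
  obtain ⟨t, ht⟩ := hFsurj 1
  have ht' : (g : Mat4) * (t : Mat4) = 1 := by
    have := congrArg (Subtype.val) ht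
    simpa [F, LinearMap.mulLeft_apply] using this
  have : ((g⁻¹ : GL4) : Mat4) = (t : Mat4) := by
    calc ((g⁻¹ : GL4) : Mat4) = ((g⁻¹ : GL4) : Mat4) * ((g : Mat4) * (t : Mat4)) := by
          rw [ht', mul_one]
      _ = (((g⁻¹ : GL4) : Mat4) * (g : Mat4)) * (t : Mat4) := by rw [mul_assoc]
      _ = (t : Mat4) := by
          rw [show ((g⁻¹ : GL4) : Mat4) * (g : Mat4) = 1 by
            rw [← Units.val_mul, inv_mul_cancel, Units.val_one], one_mul]
  intro i j hij
  rw [this]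
  exact t.2 i j hij

lemma isUnipRad_iff_mem (c : Composition 4) (g : GL4) :
    IsUnipRad c g ↔ (g : Mat4) - 1 ∈ nilrad c 1 := by
  constructor
  · rintro ⟨h1, h2⟩ i j hij
    rcases lt_trichotomy (c.index i) (c.index j) with h | h | h
    · exfalso
      have : (c.index i : ℕ) < c.index j := h
      omega
    · rw [Matrix.sub_apply, h2 i j h]
      rcases eq_or_ne i j with rfl | hne
      · simp
      · simp [hne, Matrix.one_apply_ne hne]
    · rw [Matrix.sub_apply, h1 i j h]
      have hne : i ≠ j := by
        intro h'; subst h'; exact absurd rfl (ne_of_gt h)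
      simp [Matrix.one_apply_ne hne]
  · intro h
    constructor
    · intro i j hij
      have h0 : (g : Mat4) i j - (1 : Mat4) i j = 0 := by
        have : (c.index j : ℕ) < c.index i := hij
        exact h i j (by omega)
      have hne : i ≠ j := by
        intro h'; subst h'; exact absurd rfl (ne_of_gt hij)
      rw [Matrix.one_apply_ne hne] at h0
      linarith [h0]
    · intro i j hij
      rcases eq_or_ne i j with rfl | hne
      · have h0 : (g : Mat4) i i - (1 : Mat4) i i = 0 := h i i (by omega)
        rw [Matrix.one_apply_eq] at h0
        rw [if_pos rfl]
        linarith [h0]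
      · have h0 : (g : Mat4) i j - (1 : Mat4) i j = 0 := h i j (by rw [hij]; omega)
        rw [Matrix.one_apply_ne hne] at h0
        simp only [if_neg hne]
        linarith [h0]

lemma nilrad_pow_four (c : Composition 4) {X : Mat4} (hX : X ∈ nilrad c 1) : X ^ 4 = 0 := by
  apply nilrad_four c
  have h2 : X * X ∈ nilrad c 2 := mul_mem_nilrad c hX hX
  have h4 : (X * X) * (X * X) ∈ nilrad c 4 := mul_mem_nilrad c h2 h2
  have : X ^ 4 = (X * X) * (X * X) := by noncomm_ring
  rw [this]; exact h4

/-- the inverse matrix formula for unipotent elements -/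
lemma unip_inv_eq (c : Composition 4) {g : GL4} (hg : IsUnipRad c g) :
    ((g⁻¹ : GL4) : Mat4) = 1 - ((g : Mat4) - 1) + ((g : Mat4) - 1) ^ 2 - ((g : Mat4) - 1) ^ 3 := by
  set X := (g : Mat4) - 1 with hXdef
  have hX : X ∈ nilrad c 1 := (isUnipRad_iff_mem c g).mp hg
  have hX4 : X ^ 4 = 0 := nilrad_pow_four c hX
  have key : (g : Mat4) * (1 - X + X ^ 2 - X ^ 3) = 1 := by
    have hgX : (g : Mat4) = 1 + X := by rw [hXdef]; noncomm_ring
    rw [hgX]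
    have : (1 + X) * (1 - X + X ^ 2 - X ^ 3) = 1 - X ^ 4 := by noncomm_ring
    rw [this, hX4, sub_zero]
  calc ((g⁻¹ : GL4) : Mat4) = ((g⁻¹ : GL4) : Mat4) * ((g : Mat4) * (1 - X + X ^ 2 - X ^ 3)) := by
        rw [key, mul_one]
    _ = (((g⁻¹ : GL4) : Mat4) * (g : Mat4)) * (1 - X + X ^ 2 - X ^ 3) := by rw [mul_assoc]
    _ = 1 - X + X ^ 2 - X ^ 3 := by
        rw [show ((g⁻¹ : GL4) : Mat4) * (g : Mat4) = 1 by
          rw [← Units.val_mul, inv_mul_cancel, Units.val_one], one_mul]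

lemma isUnipRad_inv (c : Composition 4) {g : GL4} (hg : IsUnipRad c g) : IsUnipRad c g⁻¹ := by
  rw [isUnipRad_iff_mem]
  rw [unip_inv_eq c hg]
  set X := (g : Mat4) - 1
  have hX : X ∈ nilrad c 1 := (isUnipRad_iff_mem c g).mp hg
  have h2 : X ^ 2 ∈ nilrad c 1 := by
    have := mul_mem_nilrad c hX hX
    rw [show X ^ 2 = X * X by noncomm_ring]
    exact nilrad_antitone c (by omega) this
  have h3 : X ^ 3 ∈ nilrad c 1 := by
    have := mul_mem_nilrad c (mul_mem_nilrad c hX hX) hX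
    rw [show X ^ 3 = X * X * X by noncomm_ring]
    exact nilrad_antitone c (by omega) this
  have : 1 - X + X ^ 2 - X ^ 3 - 1 = -X + X ^ 2 - X ^ 3 := by noncomm_ring
  rw [this]
  exact Submodule.sub_mem _ (Submodule.add_mem _ (Submodule.neg_mem _ hX) h2) h3

lemma isUnipRad_mul (c : Composition 4) {g h : GL4} (hg : IsUnipRad c g)
    (hh : IsUnipRad c h) : IsUnipRad c (g * h) := by
  rw [isUnipRad_iff_mem] at *
  have : ((g * h : GL4) : Mat4) - 1
      = ((g : Mat4) - 1) * ((h : Mat4) - 1) + ((g : Mat4) - 1) + ((h : Mat4) - 1) := by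
    rw [Units.val_mul]; noncomm_ring
  rw [this]
  exact Submodule.add_mem _ (Submodule.add_mem _
    (nilrad_antitone c (by omega) (mul_mem_nilrad c hg hh)) hg) hh

lemma isUnipRad_one (c : Composition 4) : IsUnipRad c (1 : GL4) := by
  rw [isUnipRad_iff_mem]
  simp only [Units.val_one, sub_self]
  exact Submodule.zero_mem _

/-- build a unipotent unit from a nilradical element -/
noncomputable def unipUnit (c : Composition 4) (X : Mat4) (hX : X ∈ nilrad c 1) : GL4 :=
  { val := 1 + X
    inv := 1 - X + X ^ 2 - X ^ 3
    val_inv := by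
      have : (1 + X) * (1 - X + X ^ 2 - X ^ 3) = 1 - X ^ 4 := by noncomm_ring
      rw [this, nilrad_pow_four c hX, sub_zero]
    inv_val := by
      have : (1 - X + X ^ 2 - X ^ 3) * (1 + X) = 1 - X ^ 4 := by noncomm_ring
      rw [this, nilrad_pow_four c hX, sub_zero] }

lemma unipUnit_isUnipRad (c : Composition 4) (X : Mat4) (hX : X ∈ nilrad c 1) :
    IsUnipRad c (unipUnit c X hX) := by
  rw [isUnipRad_iff_mem]
  show (1 + X) - 1 ∈ nilrad c 1
  simpa using hX

lemma isUnipRad_conj (c : Composition 4) {g n : GL4} (hg : IsLevi c g) (hn : IsUnipRad c n) :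
    IsUnipRad c (g⁻¹ * n * g) := by
  rw [isUnipRad_iff_mem] at *
  have hgi : ((g⁻¹ : GL4) : Mat4) ∈ leviAlg c := isLevi_inv c hg
  have : ((g⁻¹ * n * g : GL4) : Mat4) - 1
      = ((g⁻¹ : GL4) : Mat4) * ((n : Mat4) - 1) * (g : Mat4) := by
    simp only [Units.val_mul]
    have : ((g⁻¹ : GL4) : Mat4) * (g : Mat4) = 1 := by
      rw [← Units.val_mul, inv_mul_cancel, Units.val_one]
    rw [mul_sub, sub_mul, mul_one, this]
  rw [this]
  exact nilrad_mul_levi c hg (levi_mul_nilrad c hgi hn)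

section Semisimple

set_option maxHeartbeats 1000000
set_option synthInstance.maxHeartbeats 400000

open Polynomial

/-- squarefree annihilating polynomial forces generalized eigenvectors to be eigenvectors -/
lemma sqfree_gen_eigen {K : Type*} [Field K] {V : Type*} [AddCommGroup V] [Module K V]
    (f : Module.End K V) (p : K[X]) (hp : Squarefree p) (hann : Polynomial.aeval f p = 0)
    (μ : K) (k : ℕ) (v : V) (hv : ((f - μ • (1 : Module.End K V)) ^ k) v = 0) :
    (f - μ • (1 : Module.End K V)) v = 0 := by
  classical
  set G := EuclideanDomain.gcd p ((X - C μ) ^ k) with hGdef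
  have hGdvd : G ∣ (X - C μ) ^ k := EuclideanDomain.gcd_dvd_right _ _
  have hGp : G ∣ p := EuclideanDomain.gcd_dvd_left _ _
  have hGX : G ∣ (X - C μ) := by
    obtain ⟨i, hik, hassoc⟩ := (dvd_prime_pow (Polynomial.prime_X_sub_C μ) k).mp hGdvd
    rcases Nat.lt_or_ge i 2 with hi | hi
    · have hd : G ∣ (X - C μ) ^ i := hassoc.dvd
      have hpow : (X - C μ) ^ i ∣ (X - C μ) := by
        interval_cases i
        · simpa using one_dvd (X - C μ)
        · simp
      exact hd.trans hpow
    · exfalso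
      have h2 : (X - C μ) * (X - C μ) ∣ G := by
        have : (X - C μ) ^ 2 ∣ (X - C μ) ^ i := pow_dvd_pow _ hi
        rw [pow_two] at this
        exact this.trans hassoc.symm.dvd
      exact Polynomial.not_isUnit_X_sub_C μ (hp _ (h2.trans hGp))
  -- Bezout
  have hbez : G = p * EuclideanDomain.gcdA p ((X - C μ) ^ k)
      + (X - C μ) ^ k * EuclideanDomain.gcdB p ((X - C μ) ^ k) := by
    rw [hGdef]; exact EuclideanDomain.gcd_eq_gcd_ab _ _
  have haevalXC : Polynomial.aeval f (X - C μ) = f - μ • (1 : Module.End K V) := by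
    simp [Algebra.algebraMap_eq_smul_one]
  have hGv : (Polynomial.aeval f G) v = 0 := by
    rw [hbez]
    rw [map_add]
    rw [LinearMap.add_apply]
    have h1 : (Polynomial.aeval f (p * EuclideanDomain.gcdA p ((X - C μ) ^ k))) v = 0 := by
      rw [mul_comm, map_mul, Module.End.mul_apply]
      have : (Polynomial.aeval f p) v = 0 := by rw [hann]; rfl
      rw [this, map_zero]
    have h2 : (Polynomial.aeval f ((X - C μ) ^ k * EuclideanDomain.gcdB p ((X - C μ) ^ k))) v
        = 0 := by
      rw [mul_comm, map_mul, Module.End.mul_apply]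
      have : (Polynomial.aeval f ((X - C μ) ^ k)) v = 0 := by
        rw [map_pow, haevalXC]; exact hv
      rw [this, map_zero]
    rw [h1, h2, add_zero]
  obtain ⟨H, hH⟩ := hGX
  have : (X - C μ) = H * G := by rw [hH, mul_comm]
  calc (f - μ • (1 : Module.End K V)) v = (Polynomial.aeval f (X - C μ)) v := by
        rw [haevalXC]
    _ = (Polynomial.aeval f H) ((Polynomial.aeval f G) v) := by
        rw [this, map_mul, Module.End.mul_apply]
    _ = 0 := by rw [hGv, map_zero]

/-- main semisimplicity consequence: `ad σ` has no nilpotency -/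
lemma ad_semisimple (σ : GL4) (hσss : Squarefree (minpoly ℚ (σ : Mat4))) (Z : Mat4)
    (hcomm : (σ : Mat4) * ((σ : Mat4) * Z - Z * (σ : Mat4))
      = ((σ : Mat4) * Z - Z * (σ : Mat4)) * (σ : Mat4)) :
    (σ : Mat4) * Z = Z * (σ : Mat4) := by
  classical
  set K := AlgebraicClosure ℚ
  set Φ : Mat4 →ₐ[ℚ] Matrix (Fin 4) (Fin 4) K := (Algebra.ofId ℚ K).mapMatrix
  set s : Mat4 := (σ : Mat4)
  set s' : Matrix (Fin 4) (Fin 4) K := Φ s with hs'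
  set Z' : Matrix (Fin 4) (Fin 4) K := Φ Z with hZ'
  set W' : Matrix (Fin 4) (Fin 4) K := s' * Z' - Z' * s' with hW'
  have hWcomm : s' * W' = W' * s' := by
    rw [hW', hs', hZ']
    have := congrArg Φ hcomm
    simpa [map_mul, map_sub] using this
  -- the minimal polynomial, base changed
  have hint : IsIntegral ℚ s := Algebra.IsIntegral.isIntegral s
  set q : ℚ[X] := minpoly ℚ s
  set p : K[X] := q.map (algebraMap ℚ K) with hpdef
  have hpsq : Squarefree p := by
    have hsep : q.Separable := (PerfectField.separable_iff_squarefree).mpr hσss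
    exact (hsep.map).squarefree
  set f : Module.End K (Fin 4 → K) := Matrix.toLinAlgEquiv' s' with hf
  have hann : Polynomial.aeval f p = 0 := by
    have h1 : Polynomial.aeval s' p = 0 := by
      rw [hpdef, Polynomial.aeval_map_algebraMap]
      rw [hs', Polynomial.aeval_algHom_apply Φ s q]
      rw [minpoly.aeval ℚ s, map_zero]
    rw [hf]
    simpa [h1] using Polynomial.aeval_algHom_apply
      (Matrix.toLinAlgEquiv' (R := K) (n := Fin 4)).toAlgHom s' p
  -- eigenvectors span
  have hsup : ⨆ μ : K, f.maxGenEigenspace μ = ⊤ := Module.End.iSup_maxGenEigenspace_eq_top f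
  -- W' annihilates every eigenvector
  set Wl : Module.End K (Fin 4 → K) := Matrix.toLinAlgEquiv' W' with hWl
  set Zl : Module.End K (Fin 4 → K) := Matrix.toLinAlgEquiv' Z' with hZl
  have hWlf : Wl = f * Zl - Zl * f := by
    rw [hWl, hZl, hf, hW', map_sub, map_mul, map_mul]
  have hWf : f * Wl = Wl * f := by
    rw [hWl, hf, ← map_mul, ← map_mul, hWcomm]
  have hker : ∀ μ : K, f.maxGenEigenspace μ ≤ LinearMap.ker Wl := by
    intro μ v hv
    rw [Module.End.mem_maxGenEigenspace] at hv
    obtain ⟨k, hk⟩ := hv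
    have hev : (f - μ • (1 : Module.End K (Fin 4 → K))) v = 0 :=
      sqfree_gen_eigen f p hpsq hann μ k v hk
    -- W' v = (f - μ) (Zl v)
    have h2 : Wl v = (f - μ • (1 : Module.End K (Fin 4 → K))) (Zl v) := by
      rw [hWlf]
      simp only [LinearMap.sub_apply, Module.End.mul_apply, LinearMap.smul_apply,
        Module.End.one_apply, LinearMap.map_smul]
      have hfv : f v = μ • v := by
        have := hev
        simp only [LinearMap.sub_apply, LinearMap.smul_apply, Module.End.one_apply,
          sub_eq_zero] at this
        exact this
      rw [hfv, map_smul]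
    -- f (Wl v) = μ • (Wl v)
    have h3 : (f - μ • (1 : Module.End K (Fin 4 → K))) (Wl v) = 0 := by
      have hfv : f v = μ • v := by
        have := hev
        simp only [LinearMap.sub_apply, LinearMap.smul_apply, Module.End.one_apply,
          sub_eq_zero] at this
        exact this
      have : f (Wl v) = Wl (f v) := by
        have := congrArg (fun (T : Module.End K (Fin 4 → K)) => T v) hWf
        simpa [Module.End.mul_apply] using this
      simp only [LinearMap.sub_apply, LinearMap.smul_apply, Module.End.one_apply]
      rw [this, hfv, map_smul, sub_self]
    -- so (f-μ)^2 (Zl v) = 0, hence (f-μ)(Zl v) = 0, hence Wl v = 0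
    have h4 : ((f - μ • (1 : Module.End K (Fin 4 → K))) ^ 2) (Zl v) = 0 := by
      rw [pow_two, Module.End.mul_apply, ← h2, h3]
    have h5 : (f - μ • (1 : Module.End K (Fin 4 → K))) (Zl v) = 0 :=
      sqfree_gen_eigen f p hpsq hann μ 2 (Zl v) h4
    rw [LinearMap.mem_ker, h2, h5]
  have hWl0 : Wl = 0 := by
    have : (⊤ : Submodule K (Fin 4 → K)) ≤ LinearMap.ker Wl := by
      rw [← hsup]
      exact iSup_le hker
    rw [← LinearMap.ker_eq_top]
    exact top_le_iff.mp this
  have hW0 : W' = 0 := by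
    have h := hWl0
    rw [hWl] at h
    apply (Matrix.toLinAlgEquiv' (R := K) (n := Fin 4)).injective
    rw [h, map_zero]
  -- descend to the rationals
  have : Φ (s * Z - Z * s) = 0 := by
    rw [map_sub, map_mul, map_mul, ← hs', ← hZ', ← hW', hW0]
  have hinj : Function.Injective Φ := by
    intro a b hab
    ext i j
    have := congrArg (fun (M : Matrix (Fin 4) (Fin 4) K) => M i j) hab
    exact (algebraMap ℚ K).injective (by simpa [Φ, AlgHom.mapMatrix_apply,
      Matrix.map_apply, Algebra.ofId_apply] using this)
  have h0 : s * Z - Z * s = 0 := by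
    apply hinj
    rw [this, map_zero]
  linear_combination (norm := noncomm_ring) h0

end Semisimple

section Fitting

set_option maxHeartbeats 1000000

/-- two-sided multiplication operator -/
noncomputable def cop (a b : Mat4) : Module.End ℚ Mat4 :=
  (LinearMap.mulLeft ℚ a) * (LinearMap.mulRight ℚ b)

lemma cop_apply (a b X : Mat4) : cop a b X = a * X * b := by
  simp [cop, Module.End.mul_apply, mul_assoc]

variable (c : Composition 4) (s si uu ui : Mat4)

/-- the operator `X ↦ σ⁻¹ X σ - X` -/
noncomputable def fop : Module.End ℚ Mat4 := cop si s - 1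

lemma fop_apply (X : Mat4) : fop s si X = si * X * s - X := by
  simp [fop, cop_apply]

lemma fop_eq_zero_iff (hsis : si * s = 1) (hssi : s * si = 1) (X : Mat4) : fop s si X = 0 ↔ s * X = X * s := by
  rw [fop_apply, sub_eq_zero]
  constructor
  · intro h
    calc s * X = s * (si * X * s) * si * s := by
          rw [h]; rw [mul_assoc, hsis, mul_one]
      _ = (s * si) * X * (s * si) * s := by noncomm_ring
      _ = X * s := by rw [hssi]; noncomm_ring
  · intro h
    calc si * X * s = si * (X * s) := by rw [mul_assoc]
      _ = si * (s * X) := by rw [h]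
      _ = (si * s) * X := by rw [mul_assoc]
      _ = X := by rw [hsis, one_mul]

/-- range and kernel of `fop` are disjoint -/
lemma fop_ker_range (hsis : si * s = 1) (hssi : s * si = 1)
    (hssA : ∀ Z : Mat4, s * (s * Z - Z * s) = (s * Z - Z * s) * s → s * Z = Z * s) (Y : Mat4) (h : fop s si (fop s si Y) = 0) : fop s si Y = 0 := by
  have hW : s * (fop s si Y) = (fop s si Y) * s := (fop_eq_zero_iff s si hsis hssi _).mp h
  have hWA : fop s si Y = si * (Y * s - s * Y) := by
    rw [fop_apply]
    calc si * Y * s - Y = si * Y * s - si * s * Y := by rw [hsis, one_mul]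
      _ = si * (Y * s - s * Y) := by noncomm_ring
  have hA : Y * s - s * Y = s * (fop s si Y) := by
    rw [hWA, ← mul_assoc, hssi, one_mul]
  have hcomm : s * (s * Y - Y * s) = (s * Y - Y * s) * s := by
    have h1 : s * (Y * s - s * Y) = (Y * s - s * Y) * s := by
      rw [hA]
      calc s * (s * (fop s si Y)) = s * ((fop s si Y) * s) := by rw [hW]
        _ = (s * (fop s si Y)) * s := by rw [mul_assoc]
    have h2 : s * Y - Y * s = -(Y * s - s * Y) := by noncomm_ring
    rw [h2, mul_neg, neg_mul, h1]
  have := hssA Y hcomm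
  rw [hWA, show Y * s - s * Y = 0 by rw [sub_eq_zero]; rw [this], mul_zero]

lemma cop_mem_nilrad {a b X : Mat4} (ha : a ∈ leviAlg c) (hb : b ∈ leviAlg c) {k : ℕ}
    (hX : X ∈ nilrad c k) : cop a b X ∈ nilrad c k := by
  rw [cop_apply]
  exact nilrad_mul_levi c hb (levi_mul_nilrad c ha hX)

lemma fop_mem_nilrad (hsL : s ∈ leviAlg c) (hsiL : si ∈ leviAlg c) {X : Mat4} {k : ℕ} (hX : X ∈ nilrad c k) :
    fop s si X ∈ nilrad c k := by
  rw [fop_apply]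
  exact Submodule.sub_mem _ (by
    have := cop_mem_nilrad c hsiL hsL hX
    rwa [cop_apply] at this) hX

/-- the image submodules -/
noncomputable def rmod (j : ℕ) : Submodule ℚ Mat4 := Submodule.map (fop s si) (nilrad c j)

lemma rmod_le_nilrad (hsL : s ∈ leviAlg c) (hsiL : si ∈ leviAlg c) (j : ℕ) : rmod c s si j ≤ nilrad c j := by
  rintro x ⟨y, hy, rfl⟩
  exact fop_mem_nilrad c s si hsL hsiL hy

lemma rmod_antitone {j k : ℕ} (h : j ≤ k) : rmod c s si k ≤ rmod c s si j :=
  Submodule.map_mono (nilrad_antitone c h)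

/-- Fitting decomposition within each `nilrad c j` -/
lemma fitting (hsis : si * s = 1) (hssi : s * si = 1)
    (hssA : ∀ Z : Mat4, s * (s * Z - Z * s) = (s * Z - Z * s) * s → s * Z = Z * s)
    (hsL : s ∈ leviAlg c) (hsiL : si ∈ leviAlg c) (j : ℕ) (hj : 1 ≤ j) {X : Mat4} (hX : X ∈ nilrad c j) :
    ∃ K R : Mat4, K ∈ nilrad c 1 ∧ fop s si K = 0 ∧ R ∈ rmod c s si j ∧ X = K + R := by
  classical
  set W := nilrad c j
  have hfW : ∀ x ∈ W, fop s si x ∈ W := fun x hx => fop_mem_nilrad c s si hsL hsiL hx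
  set f' : W →ₗ[ℚ] W := (fop s si).restrict hfW with hf'
  have hdisj : LinearMap.ker f' ⊓ LinearMap.range f' = ⊥ := by
    rw [eq_bot_iff]
    rintro x ⟨hk, y, rfl⟩
    have h1 : fop s si ((f' y : Mat4)) = 0 := by
      have := congrArg (Subtype.val) hk
      simpa [f', LinearMap.restrict_apply] using this
    have h2 : (f' y : Mat4) = fop s si (y : Mat4) := by
      simp [f', LinearMap.restrict_apply]
    rw [h2] at h1
    have := fop_ker_range s si hsis hssi hssA (y : Mat4) h1
    rw [← h2] at this
    simp [Submodule.mem_bot]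
    exact Subtype.ext this
  have hsum : LinearMap.ker f' ⊔ LinearMap.range f' = ⊤ := by
    apply Submodule.eq_top_of_finrank_eq
    have h1 := Submodule.finrank_sup_add_finrank_inf_eq (LinearMap.ker f') (LinearMap.range f')
    rw [hdisj] at h1
    have h2 := LinearMap.finrank_range_add_finrank_ker f'
    simp only [finrank_bot, add_zero] at h1
    omega
  have hXW : (⟨X, hX⟩ : W) ∈ LinearMap.ker f' ⊔ LinearMap.range f' := by
    rw [hsum]; trivial
  obtain ⟨k, hk, r, hr, hkr⟩ := Submodule.mem_sup.mp hXW
  refine ⟨(k : Mat4), (r : Mat4), nilrad_antitone c hj k.2, ?_, ?_, ?_⟩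
  · have := congrArg (Subtype.val) (LinearMap.mem_ker.mp hk)
    simpa [f', LinearMap.restrict_apply] using this
  · obtain ⟨y, hy⟩ := LinearMap.mem_range.mp hr
    refine ⟨(y : Mat4), y.2, ?_⟩
    have := congrArg (Subtype.val) hy
    simpa [f', LinearMap.restrict_apply] using this
  · exact (congrArg Subtype.val hkr).symm

end Fitting

section Bop

set_option maxHeartbeats 1000000

variable (c : Composition 4) (s si uu ui : Mat4)

/-- the operator `X ↦ u⁻¹ X u` -/
noncomputable def qop : Module.End ℚ Mat4 := cop ui uu

lemma qop_apply (X : Mat4) : qop uu ui X = ui * X * uu := cop_apply _ _ _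

/-- the operator `X ↦ X - γ⁻¹ X γ` -/
noncomputable def bop : Module.End ℚ Mat4 := 1 - cop si s * cop ui uu

lemma bop_apply (X : Mat4) : bop s si uu ui X = X - si * (ui * X * uu) * s := by
  simp [bop, cop_apply, Module.End.mul_apply, LinearMap.sub_apply, mul_assoc]

/-- `qop - 1` is nilpotent -/
lemma qop_nilpotent (huiu : ui * uu = 1) (huui : uu * ui = 1) (hU4 : (uu - 1) ^ 4 = 0) :
    IsNilpotent (qop uu ui - 1) := by
  have hkey : qop uu ui - 1 = (LinearMap.mulLeft ℚ ui) *
      (LinearMap.mulRight ℚ (uu - 1) - LinearMap.mulLeft ℚ (uu - 1)) := by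
    apply LinearMap.ext
    intro X
    simp only [LinearMap.sub_apply, Module.End.mul_apply, LinearMap.mulLeft_apply,
      LinearMap.mulRight_apply, Module.End.one_apply, qop_apply]
    have h5 : ui * (X * (uu - 1) - (uu - 1) * X) = ui * X * uu - (ui * uu) * X := by
      noncomm_ring
    rw [h5, huiu, one_mul]
  have hnR : IsNilpotent (LinearMap.mulRight ℚ (uu - 1)) := by
    refine ⟨4, ?_⟩
    rw [LinearMap.pow_mulRight, hU4, LinearMap.mulRight_zero_eq_zero]
  have hnL : IsNilpotent (LinearMap.mulLeft ℚ (uu - 1)) := by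
    refine ⟨4, ?_⟩
    rw [LinearMap.pow_mulLeft, hU4, LinearMap.mulLeft_zero_eq_zero]
  have hcommRL : Commute (LinearMap.mulRight ℚ (uu - 1)) (LinearMap.mulLeft ℚ (uu - 1)) :=
    (LinearMap.commute_mulLeft_right (uu - 1) (uu - 1)).symm
  have hn : IsNilpotent (LinearMap.mulRight ℚ (uu - 1) - LinearMap.mulLeft ℚ (uu - 1)) :=
    Commute.isNilpotent_sub hcommRL hnR hnL
  rw [hkey]
  apply Commute.isNilpotent_mul_left _ hn
  -- mulLeft ui commutes with the difference
  have h1 : Commute (LinearMap.mulLeft ℚ ui) (LinearMap.mulRight ℚ (uu - 1)) :=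
    LinearMap.commute_mulLeft_right ui (uu - 1)
  have h2 : Commute (LinearMap.mulLeft ℚ ui) (LinearMap.mulLeft ℚ (uu - 1)) := by
    have huiU : ui * (uu - 1) = (uu - 1) * ui := by
      rw [mul_sub, sub_mul, mul_one, one_mul, huiu, huui]
    show _ = _
    apply LinearMap.ext
    intro X
    simp only [Module.End.mul_apply, LinearMap.mulLeft_apply]
    rw [← mul_assoc, ← mul_assoc, huiU]
  exact h1.sub_right h2

/-- commutation of the two conjugation operators -/
lemma sq_comm (hsu : s * uu = uu * s) (hsiui : si * ui = ui * si)
    (hsiu : si * uu = uu * si) (hsui : s * ui = ui * s) :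
    Commute (cop si s) (cop ui uu) := by
  show _ = _
  apply LinearMap.ext
  intro X
  simp only [Module.End.mul_apply, cop_apply]
  calc si * (ui * X * uu) * s = si * ui * X * (uu * s) := by noncomm_ring
    _ = ui * si * X * (s * uu) := by rw [hsiui, hsu]
    _ = ui * (si * X * s) * uu := by noncomm_ring

lemma qop_comm_fop (hsu : s * uu = uu * s) (hsiui : si * ui = ui * si)
    (hsiu : si * uu = uu * si) (hsui : s * ui = ui * s) :
    Commute (qop uu ui) (fop s si) := by
  have h := (sq_comm s si uu ui hsu hsiui hsiu hsui).symm
  show _ = _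
  rw [fop, qop]
  rw [mul_sub, sub_mul, mul_one, one_mul, h.eq]

lemma bop_comm_fop (hsu : s * uu = uu * s) (hsiui : si * ui = ui * si)
    (hsiu : si * uu = uu * si) (hsui : s * ui = ui * s) :
    Commute (bop s si uu ui) (fop s si) := by
  have h1 := sq_comm s si uu ui hsu hsiui hsiu hsui
  show _ = _
  rw [bop, fop]
  have h2 : Commute (cop si s * cop ui uu) (cop si s - 1) := by
    have : Commute (cop si s * cop ui uu) (cop si s) := by
      exact (Commute.refl (cop si s)).mul_left h1.symm
    exact this.sub_right (Commute.one_right _)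
  rw [sub_mul, mul_sub, one_mul, mul_one, h2.eq]
  rw [mul_sub, mul_one]

lemma bop_mem_rmod (hsu : s * uu = uu * s) (hsiui : si * ui = ui * si)
    (hsiu : si * uu = uu * si) (hsui : s * ui = ui * s)
    (hsL : s ∈ leviAlg c) (hsiL : si ∈ leviAlg c) (huL : uu ∈ leviAlg c)
    (huiL : ui ∈ leviAlg c) {j : ℕ} {x : Mat4} (hx : x ∈ rmod c s si j) :
    bop s si uu ui x ∈ rmod c s si j := by
  obtain ⟨y, hy, rfl⟩ := hx
  have h := bop_comm_fop s si uu ui hsu hsiui hsiu hsui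
  have : bop s si uu ui (fop s si y) = fop s si (bop s si uu ui y) := by
    have := congrArg (fun (T : Module.End ℚ Mat4) => T y) h.eq
    simpa [Module.End.mul_apply] using this
  rw [this]
  refine ⟨bop s si uu ui y, ?_, rfl⟩
  rw [bop_apply]
  refine Submodule.sub_mem _ hy ?_
  have h1 : ui * y * uu ∈ nilrad c j :=
    (cop_apply ui uu y) ▸ cop_mem_nilrad c huiL huL hy
  have := cop_mem_nilrad c hsiL hsL h1
  rwa [cop_apply] at this

lemma qop_mem_rmod (hsu : s * uu = uu * s) (hsiui : si * ui = ui * si)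
    (hsiu : si * uu = uu * si) (hsui : s * ui = ui * s)
    (hsL : s ∈ leviAlg c) (hsiL : si ∈ leviAlg c) (huL : uu ∈ leviAlg c)
    (huiL : ui ∈ leviAlg c) {j : ℕ} {x : Mat4} (hx : x ∈ rmod c s si j) :
    qop uu ui x ∈ rmod c s si j := by
  obtain ⟨y, hy, rfl⟩ := hx
  have h := qop_comm_fop s si uu ui hsu hsiui hsiu hsui
  have : qop uu ui (fop s si y) = fop s si (qop uu ui y) := by
    have := congrArg (fun (T : Module.End ℚ Mat4) => T y) h.eq
    simpa [Module.End.mul_apply] using this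
  rw [this]
  exact ⟨qop uu ui y, (cop_apply ui uu y) ▸ cop_mem_nilrad c huiL huL hy, rfl⟩

lemma qm1_pow_mem_rmod (hsu : s * uu = uu * s) (hsiui : si * ui = ui * si)
    (hsiu : si * uu = uu * si) (hsui : s * ui = ui * s)
    (hsL : s ∈ leviAlg c) (hsiL : si ∈ leviAlg c) (huL : uu ∈ leviAlg c)
    (huiL : ui ∈ leviAlg c) {j : ℕ} (n : ℕ) {x : Mat4} (hx : x ∈ rmod c s si j) :
    ((qop uu ui - 1) ^ n) x ∈ rmod c s si j := by
  induction n with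
  | zero => simpa using hx
  | succ n ihn =>
    rw [pow_succ', Module.End.mul_apply]
    have h1 : (qop uu ui - 1) (((qop uu ui - 1) ^ n) x)
        = qop uu ui (((qop uu ui - 1) ^ n) x) - ((qop uu ui - 1) ^ n) x := by
      simp [LinearMap.sub_apply]
    rw [h1]
    exact Submodule.sub_mem _
      (qop_mem_rmod c s si uu ui hsu hsiui hsiu hsui hsL hsiL huL huiL ihn) ihn

/-- injectivity of `bop` on the range module -/
lemma bop_inj (hsis : si * s = 1) (hssi : s * si = 1)
    (hssA : ∀ Z : Mat4, s * (s * Z - Z * s) = (s * Z - Z * s) * s → s * Z = Z * s)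
    (huiu : ui * uu = 1) (huui : uu * ui = 1) (hU4 : (uu - 1) ^ 4 = 0)
    (hsu : s * uu = uu * s) (hsiui : si * ui = ui * si)
    (hsiu : si * uu = uu * si) (hsui : s * ui = ui * s)
    (hsL : s ∈ leviAlg c) (hsiL : si ∈ leviAlg c) (huL : uu ∈ leviAlg c)
    (huiL : ui ∈ leviAlg c)
    {x : Mat4} (hx : x ∈ rmod c s si 1) (hbx : bop s si uu ui x = 0) : x = 0 := by
  obtain ⟨m, hm⟩ := qop_nilpotent uu ui huiu huui hU4
  have hfix : x = (cop si s * qop uu ui) x := by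
    have h2 : x - si * (ui * x * uu) * s = 0 := by rw [← bop_apply]; exact hbx
    have h3 := sub_eq_zero.mp h2
    rw [Module.End.mul_apply, cop_apply, qop_apply]
    exact h3
  have hcomm : Commute (qop uu ui - 1) (cop si s * qop uu ui) := by
    have h1 : Commute (qop uu ui - 1) (cop si s) :=
      ((sq_comm s si uu ui hsu hsiui hsiu hsui).symm).sub_left (Commute.one_left _)
    have h2 : Commute (qop uu ui - 1) (qop uu ui) :=
      (Commute.refl (qop uu ui)).sub_left (Commute.one_left _)
    exact h1.mul_right h2
  have key : ∀ t : ℕ, ((qop uu ui - 1) ^ (m - t)) x = 0 := by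
    intro t
    induction t with
    | zero => simpa using congrArg (fun (T : Module.End ℚ Mat4) => T x) hm
    | succ t ih =>
      rcases le_or_gt m t with h | h
      · have h0 : m - t = 0 := by omega
        have h1 : m - (t + 1) = 0 := by omega
        rw [h1, ← h0]
        exact ih
      · have h0 : m - t = (m - (t + 1)) + 1 := by omega
        set k := m - (t + 1) with hk
        set y := ((qop uu ui - 1) ^ k) x with hy
        have hyr : y ∈ rmod c s si 1 :=
          qm1_pow_mem_rmod c s si uu ui hsu hsiui hsiu hsui hsL hsiL huL huiL k hx
        have hqy : (qop uu ui - 1) y = 0 := by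
          have : ((qop uu ui - 1) ^ (m - t)) x = (qop uu ui - 1) y := by
            rw [h0, hy, pow_succ', Module.End.mul_apply]
          rw [← this]
          exact ih
        have hyfix : y = cop si s (qop uu ui y) := by
          have h1 : ((qop uu ui - 1) ^ k) ((cop si s * qop uu ui) x)
              = (cop si s * qop uu ui) y := by
            have := congrArg (fun (T : Module.End ℚ Mat4) => T x) (hcomm.pow_left k).eq
            simpa [Module.End.mul_apply, hy] using this
          calc y = ((qop uu ui - 1) ^ k) x := hy
            _ = ((qop uu ui - 1) ^ k) ((cop si s * qop uu ui) x) := by rw [← hfix]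
            _ = (cop si s * qop uu ui) y := h1
            _ = cop si s (qop uu ui y) := by rw [Module.End.mul_apply]
        have hqyy : qop uu ui y = y := by
          have := hqy
          simp only [LinearMap.sub_apply, Module.End.one_apply, sub_eq_zero] at this
          exact this
        have hfy : fop s si y = 0 := by
          rw [fop, LinearMap.sub_apply, Module.End.one_apply, sub_eq_zero]
          conv_rhs => rw [hyfix, hqyy]
        obtain ⟨w, hw, hwy⟩ := hyr
        rw [← hwy] at hfy
        have h9 := fop_ker_range s si hsis hssi hssA w hfy
        rw [hwy] at h9
        exact h9
  have := key m
  simpa using this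

/-- surjectivity of `bop` on each range module -/
lemma bop_surj (hsis : si * s = 1) (hssi : s * si = 1)
    (hssA : ∀ Z : Mat4, s * (s * Z - Z * s) = (s * Z - Z * s) * s → s * Z = Z * s)
    (huiu : ui * uu = 1) (huui : uu * ui = 1) (hU4 : (uu - 1) ^ 4 = 0)
    (hsu : s * uu = uu * s) (hsiui : si * ui = ui * si)
    (hsiu : si * uu = uu * si) (hsui : s * ui = ui * s)
    (hsL : s ∈ leviAlg c) (hsiL : si ∈ leviAlg c) (huL : uu ∈ leviAlg c)
    (huiL : ui ∈ leviAlg c) (j : ℕ) (hj : 1 ≤ j)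
    {y : Mat4} (hy : y ∈ rmod c s si j) :
    ∃ x ∈ rmod c s si j, bop s si uu ui x = y := by
  classical
  set W := rmod c s si j
  have hBW : ∀ x ∈ W, bop s si uu ui x ∈ W := fun x hx =>
    bop_mem_rmod c s si uu ui hsu hsiui hsiu hsui hsL hsiL huL huiL hx
  set B' : W →ₗ[ℚ] W := (bop s si uu ui).restrict hBW with hB'
  have hinj : Function.Injective B' := by
    intro a b hab
    have h1 : bop s si uu ui ((a : Mat4) - (b : Mat4)) = 0 := by
      have := congrArg (Subtype.val) hab
      simp only [hB', LinearMap.restrict_apply] at this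
      rw [map_sub, this, sub_self]
    have h2 : (a : Mat4) - (b : Mat4) ∈ rmod c s si 1 := by
      have := Submodule.sub_mem W a.2 b.2
      exact rmod_antitone c s si hj this
    have := bop_inj c s si uu ui hsis hssi hssA huiu huui hU4 hsu hsiui hsiu hsui
      hsL hsiL huL huiL h2 h1
    exact Subtype.ext (sub_eq_zero.mp this)
  have hsurj : Function.Surjective B' := (LinearMap.injective_iff_surjective).mp hinj
  obtain ⟨x, hxeq⟩ := hsurj ⟨y, hy⟩
  refine ⟨(x : Mat4), x.2, ?_⟩
  have := congrArg (Subtype.val) hxeq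
  simpa [hB', LinearMap.restrict_apply] using this

end Bop

section Key

set_option maxHeartbeats 2000000

/-- the central structural lemma: existence and uniqueness of the twisting coset -/
lemma key_main (c : Composition 4) (γ σ u : GL4)
    (hγ : IsLevi c γ) (hσ : IsLevi c σ)
    (hσss : Squarefree (minpoly ℚ (σ : Mat4)))
    (hu : IsLevi c u) (huni : ((u : Mat4) - 1) ^ 4 = 0)
    (hJ : γ = σ * u) (hJ' : σ * u = u * σ) :
    (∀ n : GL4, IsUnipRad c n → ∃ δ : GL4, IsUnipRad c δ ∧
      (γ⁻¹ * δ * γ * n * δ⁻¹) * σ = σ * (γ⁻¹ * δ * γ * n * δ⁻¹)) ∧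
    (∀ n δ δ' : GL4, IsUnipRad c n → IsUnipRad c δ → IsUnipRad c δ' →
      (γ⁻¹ * δ * γ * n * δ⁻¹) * σ = σ * (γ⁻¹ * δ * γ * n * δ⁻¹) →
      (γ⁻¹ * δ' * γ * n * δ'⁻¹) * σ = σ * (γ⁻¹ * δ' * γ * n * δ'⁻¹) →
      IsUnipRad c (δ' * δ⁻¹) ∧ (δ' * δ⁻¹) * σ = σ * (δ' * δ⁻¹)) := by
  classical
  set s : Mat4 := (σ : Mat4) with hs
  set si : Mat4 := ((σ⁻¹ : GL4) : Mat4) with hsi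
  set uu : Mat4 := (u : Mat4) with huu
  set ui : Mat4 := ((u⁻¹ : GL4) : Mat4) with hui
  have hsis : si * s = 1 := by
    rw [hsi, hs, ← Units.val_mul, inv_mul_cancel, Units.val_one]
  have hssi : s * si = 1 := by
    rw [hsi, hs, ← Units.val_mul, mul_inv_cancel, Units.val_one]
  have huiu : ui * uu = 1 := by
    rw [hui, huu, ← Units.val_mul, inv_mul_cancel, Units.val_one]
  have huui : uu * ui = 1 := by
    rw [hui, huu, ← Units.val_mul, mul_inv_cancel, Units.val_one]
  have hcsu : Commute σ u := hJ'
  have hsu : s * uu = uu * s := congrArg Units.val hcsu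
  have hsiu : si * uu = uu * si := congrArg Units.val hcsu.inv_left
  have hsui : s * ui = ui * s := congrArg Units.val hcsu.inv_right
  have hsiui : si * ui = ui * si := congrArg Units.val hcsu.inv_left.inv_right
  have hssA : ∀ Z : Mat4, s * (s * Z - Z * s) = (s * Z - Z * s) * s → s * Z = Z * s :=
    fun Z hZ => ad_semisimple σ hσss Z hZ
  have hsL : s ∈ leviAlg c := hσ
  have hsiL : si ∈ leviAlg c := isLevi_inv c hσ
  have huL : uu ∈ leviAlg c := hu
  have huiL : ui ∈ leviAlg c := isLevi_inv c hu
  have hU4 : (uu - 1) ^ 4 = 0 := huni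
  have hγL : IsLevi c γ := hγ
  have hγiL : IsLevi c γ⁻¹ := isLevi_inv c hγ
  have hg : (γ : Mat4) = s * uu := by rw [hJ, Units.val_mul]
  have hgi : ((γ⁻¹ : GL4) : Mat4) = ui * si := by
    rw [hJ, mul_inv_rev, Units.val_mul]
  -- kernel elements multiply
  have hker_mul : ∀ a b : Mat4, fop s si a = 0 → fop s si b = 0 → fop s si (a * b) = 0 := by
    intro a b ha hb
    rw [fop_eq_zero_iff s si hsis hssi] at *
    calc s * (a * b) = (s * a) * b := by rw [mul_assoc]
      _ = a * (s * b) := by rw [ha, mul_assoc]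
      _ = a * b * s := by rw [hb, mul_assoc]
  -- the "adjoint" identity
  have hAd : ∀ Z : Mat4, ((γ⁻¹ : GL4) : Mat4) * Z * (γ : Mat4) = Z - bop s si uu ui Z := by
    intro Z
    rw [bop_apply, hg, hgi]
    have : ui * si * Z * (s * uu) = si * (ui * Z * uu) * s := by
      calc ui * si * Z * (s * uu) = ui * si * Z * (uu * s) := by rw [hsu]
        _ = (ui * si) * (Z * uu) * s := by noncomm_ring
        _ = (si * ui) * (Z * uu) * s := by rw [hsiui]
        _ = si * (ui * Z * uu) * s := by noncomm_ring
    rw [this]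
    noncomm_ring
  -- conjugation of a unipotent by γ stays unipotent
  have hconj : ∀ d : GL4, IsUnipRad c d → IsUnipRad c (γ⁻¹ * d * γ) := by
    intro d hd
    have := isUnipRad_conj c hγ hd
    exact this
  -- the η element is unipotent
  have hη_unip : ∀ n δ : GL4, IsUnipRad c n → IsUnipRad c δ →
      IsUnipRad c (γ⁻¹ * δ * γ * n * δ⁻¹) := by
    intro n δ hn hδ
    have h1 : IsUnipRad c (γ⁻¹ * δ * γ) := hconj δ hδ
    have h2 := isUnipRad_mul c (isUnipRad_mul c h1 hn) (isUnipRad_inv c hδ)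
    convert h2 using 2
    done
  -- commutation with σ at the unit level versus matrix level
  have hcommσ : ∀ a : GL4, a * σ = σ * a ↔ s * ((a : GL4) : Mat4) = ((a : GL4) : Mat4) * s := by
    intro a
    constructor
    · intro h
      have := congrArg Units.val h
      simp only [Units.val_mul] at this
      rw [← hs] at this
      exact this.symm
    · intro h
      apply Units.ext
      simp only [Units.val_mul]
      rw [← hs]
      exact h.symm
  -- EXISTENCE
  have Hex : ∀ n : GL4, IsUnipRad c n → ∃ δ : GL4, IsUnipRad c δ ∧
      (γ⁻¹ * δ * γ * n * δ⁻¹) * σ = σ * (γ⁻¹ * δ * γ * n * δ⁻¹) := by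
    intro n hn
    -- inductive invariant
    have main : ∀ j : ℕ, 1 ≤ j → ∃ δ : GL4, IsUnipRad c δ ∧ ∃ K R : Mat4,
        fop s si K = 0 ∧ R ∈ rmod c s si j ∧
        ((γ⁻¹ * δ * γ * n * δ⁻¹ : GL4) : Mat4) - 1 = K + R := by
      intro j hj
      induction j with
      | zero => omega
      | succ j ihj =>
        rcases Nat.eq_or_lt_of_le hj with h1 | h1
        · -- base case j = 1
          have hj0 : j = 0 := by omega
          subst hj0
          refine ⟨1, isUnipRad_one c, ?_⟩
          have hbase : ((γ⁻¹ * 1 * γ * n * 1⁻¹ : GL4) : Mat4) = (n : Mat4) := by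
            norm_num
          have hmem : (n : Mat4) - 1 ∈ nilrad c 1 := (isUnipRad_iff_mem c n).mp hn
          obtain ⟨K, R, hK1, hKf, hR, hKR⟩ :=
            fitting c s si hsis hssi hssA hsL hsiL 1 le_rfl hmem
          refine ⟨K, R, hKf, ?_, ?_⟩
          · simpa using hR
          · rw [hbase]; exact hKR
        · -- inductive step: j ≥ 1 gives invariant at j, improve to j+1
          obtain ⟨δ, hδ, K, R, hKf, hR, hKR⟩ := ihj (by omega)
          -- choose Z with bop Z = R
          obtain ⟨Z, hZmem, hZB⟩ := bop_surj c s si uu ui hsis hssi hssA huiu huui hU4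
            hsu hsiui hsiu hsui hsL hsiL huL huiL j (by omega) hR
          have hZ1 : Z ∈ nilrad c 1 :=
            nilrad_antitone c (by omega) (rmod_le_nilrad c s si hsL hsiL j hZmem)
          have hZj : Z ∈ nilrad c j := rmod_le_nilrad c s si hsL hsiL j hZmem
          set δZ : GL4 := unipUnit c Z hZ1 with hδZ
          have hδZu : IsUnipRad c δZ := unipUnit_isUnipRad c Z hZ1
          refine ⟨δZ * δ, isUnipRad_mul c hδZu hδ, ?_⟩
          -- group identity
          have hgrp : γ⁻¹ * (δZ * δ) * γ * n * (δZ * δ)⁻¹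
              = (γ⁻¹ * δZ * γ) * (γ⁻¹ * δ * γ * n * δ⁻¹) * δZ⁻¹ := by
            group
          have hδZval : (δZ : Mat4) = 1 + Z := rfl
          have hδZinv : ((δZ⁻¹ : GL4) : Mat4) = 1 + (-Z + Z ^ 2 - Z ^ 3) := by
            rw [unip_inv_eq c hδZu]
            rw [hδZval]
            noncomm_ring
          have hconjval : ((γ⁻¹ * δZ * γ : GL4) : Mat4)
              = 1 + (Z - bop s si uu ui Z) := by
            simp only [Units.val_mul]
            rw [hδZval]
            have h2 : ((γ⁻¹ : GL4) : Mat4) * (1 + Z) * (γ : Mat4)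
                = ((γ⁻¹ : GL4) : Mat4) * (γ : Mat4) + ((γ⁻¹ : GL4) : Mat4) * Z * (γ : Mat4) := by
              noncomm_ring
            rw [h2, hAd Z]
            rw [show ((γ⁻¹ : GL4) : Mat4) * (γ : Mat4) = 1 by
              rw [← Units.val_mul, inv_mul_cancel, Units.val_one]]
          -- expansion
          set cc : Mat4 := ((γ⁻¹ * δ * γ * n * δ⁻¹ : GL4) : Mat4) - 1 with hcc
          have hcc1 : cc ∈ nilrad c 1 := (isUnipRad_iff_mem c _).mp (hη_unip n δ hn hδ)
          set W : Mat4 := Z - bop s si uu ui Z with hW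
          set Z2 : Mat4 := -Z + Z ^ 2 - Z ^ 3 with hZ2
          have h0 : ((γ⁻¹ * (δZ * δ) * γ * n * (δZ * δ)⁻¹ : GL4) : Mat4)
              = ((γ⁻¹ * δZ * γ : GL4) : Mat4) * ((γ⁻¹ * δ * γ * n * δ⁻¹ : GL4) : Mat4)
                * ((δZ⁻¹ : GL4) : Mat4) := by
            rw [hgrp]; rfl
          have hmid : ((γ⁻¹ * δ * γ * n * δ⁻¹ : GL4) : Mat4) = 1 + cc := by
            rw [hcc]; abel
          have hval : ((γ⁻¹ * (δZ * δ) * γ * n * (δZ * δ)⁻¹ : GL4) : Mat4) - 1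
              = (1 + W) * (1 + cc) * (1 + Z2) - 1 := by
            rw [h0, hconjval, hδZinv, hmid]
          -- regroup
          set ν : Mat4 := (Z2 + Z) + W * cc + W * Z2 + cc * Z2 + W * cc * Z2 with hν
          have hexp : (1 + W) * (1 + cc) * (1 + Z2) - 1 = (cc + W - Z) + ν := by
            rw [hν, hZ2]
            noncomm_ring
          have hccW : cc + W - Z = K := by
            rw [hKR, hW, hZB]
            abel
          -- ν lies one level deeper
          have hWmem : W ∈ nilrad c j := by
            have hWval : W = si * (ui * Z * uu) * s := by
              rw [hW, bop_apply]; abel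
            rw [hWval]
            exact nilrad_mul_levi c hsL (levi_mul_nilrad c hsiL
              (nilrad_mul_levi c huL (levi_mul_nilrad c huiL hZj)))
          have hνmem : ν ∈ nilrad c (j + 1) := by
            have hZ21 : Z2 + Z ∈ nilrad c (j + 1) := by
              have h2 : Z * Z ∈ nilrad c (j + j) := mul_mem_nilrad c hZj hZj
              have h3 : Z * Z * Z ∈ nilrad c (j + j + j) := mul_mem_nilrad c h2 hZj
              have : Z2 + Z = Z * Z - Z * Z * Z := by rw [hZ2]; noncomm_ring
              rw [this]
              exact Submodule.sub_mem _
                (nilrad_antitone c (by omega) h2) (nilrad_antitone c (by omega) h3)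
            have hZ2j : Z2 ∈ nilrad c j := by
              have h2 : Z * Z ∈ nilrad c (j + j) := mul_mem_nilrad c hZj hZj
              have h3 : Z * Z * Z ∈ nilrad c (j + j + j) := mul_mem_nilrad c h2 hZj
              have : Z2 = -Z + Z * Z - Z * Z * Z := by rw [hZ2]; noncomm_ring
              rw [this]
              exact Submodule.sub_mem _ (Submodule.add_mem _ (Submodule.neg_mem _ hZj)
                (nilrad_antitone c (by omega) h2)) (nilrad_antitone c (by omega) h3)
            rw [hν]
            refine Submodule.add_mem _ (Submodule.add_mem _ (Submodule.add_mem _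
              (Submodule.add_mem _ hZ21 ?_) ?_) ?_) ?_
            · exact nilrad_antitone c (le_refl _) (mul_mem_nilrad c hWmem hcc1)
            · exact nilrad_antitone c (by omega) (mul_mem_nilrad c hWmem hZ2j)
            · exact nilrad_antitone c (by omega) (mul_mem_nilrad c hcc1 hZ2j)
            · exact nilrad_antitone c (by omega)
                (mul_mem_nilrad c (mul_mem_nilrad c hWmem hcc1) hZ2j)
          obtain ⟨K2, R2, hK21, hK2f, hR2, hK2R2⟩ :=
            fitting c s si hsis hssi hssA hsL hsiL (j + 1) (by omega) hνmem
          refine ⟨K + K2, R2, ?_, hR2, ?_⟩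
          · rw [map_add, hKf, hK2f, add_zero]
          · rw [hval, hexp, hccW, hK2R2]
            abel
    -- conclude: at level 4 the remainder vanishes
    obtain ⟨δ, hδ, K, R, hKf, hR, hKR⟩ := main 4 (by omega)
    refine ⟨δ, hδ, ?_⟩
    have hR0 : R = 0 := by
      obtain ⟨w, hw, hwR⟩ := hR
      have : w = 0 := nilrad_four c hw
      rw [← hwR, this, map_zero]
    rw [hR0, add_zero] at hKR
    rw [hcommσ]
    have hsK : s * K = K * s := (fop_eq_zero_iff s si hsis hssi K).mp hKf
    have hval : ((γ⁻¹ * δ * γ * n * δ⁻¹ : GL4) : Mat4) = 1 + K := by rw [← hKR]; abel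
    rw [hval, mul_add, add_mul, mul_one, one_mul, hsK]
  -- UNIQUENESS
  have Huniq : ∀ n δ δ' : GL4, IsUnipRad c n → IsUnipRad c δ → IsUnipRad c δ' →
      (γ⁻¹ * δ * γ * n * δ⁻¹) * σ = σ * (γ⁻¹ * δ * γ * n * δ⁻¹) →
      (γ⁻¹ * δ' * γ * n * δ'⁻¹) * σ = σ * (γ⁻¹ * δ' * γ * n * δ'⁻¹) →
      IsUnipRad c (δ' * δ⁻¹) ∧ (δ' * δ⁻¹) * σ = σ * (δ' * δ⁻¹) := by
    intro n δ δ' hn hδ hδ' hcη hcη'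
    set θ : GL4 := δ' * δ⁻¹ with hθ
    have hθu : IsUnipRad c θ := isUnipRad_mul c hδ' (isUnipRad_inv c hδ)
    refine ⟨hθu, ?_⟩
    set η : GL4 := γ⁻¹ * δ * γ * n * δ⁻¹ with hη
    set η' : GL4 := γ⁻¹ * δ' * γ * n * δ'⁻¹ with hη'
    have hrel : γ⁻¹ * θ * γ = η' * θ * η⁻¹ := by
      rw [hθ, hη, hη']
      group
    -- matrix form
    set Zθ : Mat4 := (θ : Mat4) - 1 with hZθ
    have hZθ1 : Zθ ∈ nilrad c 1 := (isUnipRad_iff_mem c θ).mp hθu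
    set K1 : Mat4 := (η' : Mat4) - 1 with hK1def
    set K2 : Mat4 := ((η⁻¹ : GL4) : Mat4) - 1 with hK2def
    have hη'u : IsUnipRad c η' := hη_unip n δ' hn hδ'
    have hηu : IsUnipRad c η := hη_unip n δ hn hδ
    have hK1n : K1 ∈ nilrad c 1 := (isUnipRad_iff_mem c η').mp hη'u
    have hK2n : K2 ∈ nilrad c 1 := (isUnipRad_iff_mem c η⁻¹).mp (isUnipRad_inv c hηu)
    have hK1f : fop s si K1 = 0 := by
      rw [fop_eq_zero_iff s si hsis hssi]
      have h1 : s * (η' : Mat4) = (η' : Mat4) * s := (hcommσ η').mp hcη'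
      rw [hK1def, mul_sub, sub_mul, mul_one, one_mul, h1]
    have hK2f : fop s si K2 = 0 := by
      rw [fop_eq_zero_iff s si hsis hssi]
      have hcinv : η⁻¹ * σ = σ * η⁻¹ := by
        have h := hcη
        calc η⁻¹ * σ = η⁻¹ * σ * (η * η⁻¹) := by rw [mul_inv_cancel, mul_one]
          _ = η⁻¹ * (σ * η) * η⁻¹ := by group
          _ = η⁻¹ * (η * σ) * η⁻¹ := by rw [← h]
          _ = σ * η⁻¹ := by group
      have h1 : s * ((η⁻¹ : GL4) : Mat4) = ((η⁻¹ : GL4) : Mat4) * s := (hcommσ η⁻¹).mp hcinv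
      rw [hK2def, mul_sub, sub_mul, mul_one, one_mul, h1]
    -- the matrix relation:  Zθ - bop Zθ = expansion
    have hmrel : Zθ - bop s si uu ui Zθ
        = Zθ + (K1 + K2 + K1 * K2 + K1 * Zθ + Zθ * K2 + K1 * Zθ * K2) := by
      have h0 : ((γ⁻¹ * θ * γ : GL4) : Mat4)
          = ((γ⁻¹ : GL4) : Mat4) * (θ : Mat4) * (γ : Mat4) := rfl
      have h1 : ((η' * θ * η⁻¹ : GL4) : Mat4)
          = (η' : Mat4) * (θ : Mat4) * ((η⁻¹ : GL4) : Mat4) := rfl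
      have h2 := congrArg Units.val hrel
      rw [h0, h1] at h2
      have h3 : ((γ⁻¹ : GL4) : Mat4) * (θ : Mat4) * (γ : Mat4)
          = ((γ⁻¹ : GL4) : Mat4) * (γ : Mat4) + ((γ⁻¹ : GL4) : Mat4) * Zθ * (γ : Mat4) := by
        rw [hZθ]; noncomm_ring
      have h4 : ((γ⁻¹ : GL4) : Mat4) * (γ : Mat4) = 1 := by
        rw [← Units.val_mul, inv_mul_cancel, Units.val_one]
      rw [h3, h4, hAd Zθ] at h2
      have h5 : (η' : Mat4) * (θ : Mat4) * ((η⁻¹ : GL4) : Mat4)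
          = (1 + K1) * (1 + Zθ) * (1 + K2) := by
        rw [hK1def, hK2def, hZθ]
        noncomm_ring
      rw [h5] at h2
      have h6 : (1 + K1) * (1 + Zθ) * (1 + K2)
          = 1 + (Zθ + (K1 + K2 + K1 * K2 + K1 * Zθ + Zθ * K2 + K1 * Zθ * K2)) := by
        noncomm_ring
      rw [h6] at h2
      have := add_left_cancel h2
      exact this
    have hbZθ : bop s si uu ui Zθ
        = -(K1 + K2 + K1 * K2 + K1 * Zθ + Zθ * K2 + K1 * Zθ * K2) := by
      have := hmrel
      have h7 : Zθ - bop s si uu ui Zθ - Zθ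
          = K1 + K2 + K1 * K2 + K1 * Zθ + Zθ * K2 + K1 * Zθ * K2 := by
        rw [this]; abel
      rw [← h7]; abel
    -- inductive invariant
    have main : ∀ j : ℕ, 1 ≤ j → ∃ K R : Mat4,
        fop s si K = 0 ∧ K ∈ nilrad c 1 ∧ R ∈ rmod c s si j ∧ Zθ = K + R := by
      intro j hj
      induction j with
      | zero => omega
      | succ j ihj =>
        rcases Nat.eq_or_lt_of_le hj with h1 | h1
        · have hj0 : j = 0 := by omega
          subst hj0
          obtain ⟨K, R, hKn, hKf2, hRmem, hKR⟩ :=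
            fitting c s si hsis hssi hssA hsL hsiL 1 le_rfl hZθ1
          exact ⟨K, R, hKf2, hKn, by simpa using hRmem, hKR⟩
        · obtain ⟨K, R, hKf2, hKn, hRmem, hKR⟩ := ihj (by omega)
          have hRj : R ∈ nilrad c j := rmod_le_nilrad c s si hsL hsiL j hRmem
          -- bop K is in the kernel
          have hQK : fop s si (qop uu ui K) = 0 := by
            have hcom := qop_comm_fop s si uu ui hsu hsiui hsiu hsui
            have : fop s si (qop uu ui K) = qop uu ui (fop s si K) := by
              have := congrArg (fun (T : Module.End ℚ Mat4) => T K) hcom.eq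
              simpa [Module.End.mul_apply] using this.symm
            rw [this, hKf2, map_zero]
          have hbopK : bop s si uu ui K = K - qop uu ui K := by
            have h8 : cop si s (cop ui uu K) = cop ui uu K := by
              have h8' := hQK
              rw [fop, LinearMap.sub_apply, Module.End.one_apply, sub_eq_zero] at h8'
              exact h8'
            rw [bop, LinearMap.sub_apply, Module.End.one_apply, Module.End.mul_apply, h8]
            rfl
          have hbopKf : fop s si (bop s si uu ui K) = 0 := by
            rw [hbopK, map_sub, hKf2, hQK, sub_zero]
          have hbopKn : bop s si uu ui K ∈ nilrad c 1 := by
            rw [hbopK, qop_apply]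
            exact Submodule.sub_mem _ hKn
              (nilrad_mul_levi c huL (levi_mul_nilrad c huiL hKn))
          -- helper: kernel ∩ range = 0
          have hrk : ∀ x : Mat4, x ∈ rmod c s si 1 → fop s si x = 0 → x = 0 := by
            intro x hx hfx
            obtain ⟨w, hw, hwx⟩ := hx
            rw [← hwx] at hfx
            have := fop_ker_range s si hsis hssi hssA w hfx
            rw [← hwx]; exact this
          -- decompose the relation
          set KK : Mat4 := -(bop s si uu ui K)
            - (K1 + K2 + K1 * K2 + K1 * K + K * K2 + K1 * K * K2) with hKK
          set NN : Mat4 := -(K1 * R + R * K2 + K1 * R * K2) with hNN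
          have h10 := hbZθ
          rw [hKR, map_add] at h10
          have hsplit : bop s si uu ui R = KK + NN := by
            have h12 : bop s si uu ui R
                = (bop s si uu ui K + bop s si uu ui R) - bop s si uu ui K := by abel
            rw [h12, h10, hKK, hNN]
            noncomm_ring
          -- KK is in the kernel
          have hKKf : fop s si KK = 0 := by
            rw [hKK]
            have m1 := hker_mul K1 K2 hK1f hK2f
            have m2 := hker_mul K1 K hK1f hKf2
            have m3 := hker_mul K K2 hKf2 hK2f
            have m4 := hker_mul (K1 * K) K2 m2 hK2f
            simp only [map_sub, map_neg, map_add, hbopKf, hK1f, hK2f, m1, m2, m3, m4]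
            abel
          -- NN is one level deeper
          have hNNmem : NN ∈ nilrad c (j + 1) := by
            rw [hNN]
            refine Submodule.neg_mem _ (Submodule.add_mem _ (Submodule.add_mem _ ?_ ?_) ?_)
            · exact nilrad_antitone c (by omega) (mul_mem_nilrad c hK1n hRj)
            · exact nilrad_antitone c (by omega) (mul_mem_nilrad c hRj hK2n)
            · exact nilrad_antitone c (by omega)
                (mul_mem_nilrad c (mul_mem_nilrad c hK1n hRj) hK2n)
          obtain ⟨K4, R4, hK4n, hK4f, hR4mem, hK4R4⟩ :=
            fitting c s si hsis hssi hssA hsL hsiL (j + 1) (by omega) hNNmem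
          -- bop R = R4
          have hbopR_mem : bop s si uu ui R ∈ rmod c s si j :=
            bop_mem_rmod c s si uu ui hsu hsiui hsiu hsui hsL hsiL huL huiL hRmem
          have hdiff0 : bop s si uu ui R - R4 = 0 := by
            apply hrk
            · refine Submodule.sub_mem _ ?_ ?_
              · exact rmod_antitone c s si (by omega) hbopR_mem
              · exact rmod_antitone c s si (by omega) hR4mem
            · have : bop s si uu ui R - R4 = KK + K4 := by
                rw [hsplit, hK4R4]; abel
              rw [this, map_add, hKKf, hK4f, add_zero]
          have hbopR : bop s si uu ui R = R4 := sub_eq_zero.mp hdiff0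
          -- pull back through bop
          obtain ⟨R', hR'mem, hR'B⟩ := bop_surj c s si uu ui hsis hssi hssA huiu huui hU4
            hsu hsiui hsiu hsui hsL hsiL huL huiL (j + 1) (by omega) hR4mem
          have hRR' : R = R' := by
            have h13 : bop s si uu ui (R - R') = 0 := by
              rw [map_sub, hbopR, hR'B, sub_self]
            have h14 : R - R' ∈ rmod c s si 1 := by
              refine Submodule.sub_mem _ ?_ ?_
              · exact rmod_antitone c s si (by omega) hRmem
              · exact rmod_antitone c s si (by omega) hR'mem
            have := bop_inj c s si uu ui hsis hssi hssA huiu huui hU4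
              hsu hsiui hsiu hsui hsL hsiL huL huiL h14 h13
            exact sub_eq_zero.mp this
          exact ⟨K, R', hKf2, hKn, hR'mem, by rw [← hRR']; exact hKR⟩
    -- conclude at level 4
    obtain ⟨K, R, hKf2, hKn, hRmem, hKR⟩ := main 4 (by omega)
    have hR0 : R = 0 := by
      obtain ⟨w, hw, hwR⟩ := hRmem
      have : w = 0 := nilrad_four c hw
      rw [← hwR, this, map_zero]
    rw [hR0, add_zero] at hKR
    rw [hcommσ]
    have hsK : s * K = K * s := (fop_eq_zero_iff s si hsis hssi K).mp hKf2
    have hval : (θ : Mat4) = 1 + K := by rw [← hKR, hZθ]; abel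
    rw [hval, mul_add, add_mul, mul_one, one_mul, hsK]
  exact ⟨Hex, Huniq⟩

end Key

set_option maxHeartbeats 2000000 in
/-- The discrete unipotent summation identity (Lemma 6.2 of the paper) for finitely
supported functions: if `γ = σu = uσ` is the Jordan decomposition of `γ ∈ M` (with `σ ∈ M`
semisimple and `u ∈ M` unipotent), `N(σ)` is the centralizer of `σ` in `N`, and `D ⊆ N`
contains exactly one element of each right coset of `N(σ)` in `N`, then for every finitely
supported `φ : N → ℂ`, only finitely many of the terms `φ(γ⁻¹δ⁻¹γηδ)` (for `δ ∈ D`,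
`η ∈ N(σ)`) are nonzero, and their double sum equals `∑_{η ∈ N} φ(η)`. -/
theorem unipotent_summation
    (c : Composition 4) (γ σ u : GL4)
    (hγ : IsLevi c γ) (hσ : IsLevi c σ)
    (hσss : Squarefree (minpoly ℚ (σ : Matrix (Fin 4) (Fin 4) ℚ)))
    (hu : IsLevi c u) (huni : ((u : Matrix (Fin 4) (Fin 4) ℚ) - 1) ^ 4 = 0)
    (hJ : γ = σ * u) (hJ' : σ * u = u * σ)
    (φ : GL4 → ℂ) (hφ : (Function.support φ).Finite)
    (D : Set GL4) (hD : D ⊆ {n : GL4 | IsUnipRad c n})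
    (hD' : ∀ n : GL4, IsUnipRad c n →
      ∃! d : GL4, d ∈ D ∧ ∃ η : GL4, IsUnipRad c η ∧ η * σ = σ * η ∧ n = η * d) :
    {p : GL4 × GL4 | p.1 ∈ D ∧ (IsUnipRad c p.2 ∧ p.2 * σ = σ * p.2) ∧
        φ (γ⁻¹ * p.1⁻¹ * γ * p.2 * p.1) ≠ 0}.Finite ∧
    (∑ᶠ δ ∈ D, ∑ᶠ η ∈ {η : GL4 | IsUnipRad c η ∧ η * σ = σ * η},
        φ (γ⁻¹ * δ⁻¹ * γ * η * δ)) =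
      ∑ᶠ η ∈ {η : GL4 | IsUnipRad c η}, φ η := by
  classical
  obtain ⟨Hex, Huniq⟩ := key_main c γ σ u hγ hσ hσss hu huni hJ hJ'
  set T : Set GL4 := {η : GL4 | IsUnipRad c η ∧ η * σ = σ * η} with hT
  set Nset : Set GL4 := {η : GL4 | IsUnipRad c η} with hNset
  set F : GL4 × GL4 → GL4 := fun p => γ⁻¹ * p.1⁻¹ * γ * p.2 * p.1 with hF
  have hγσ : Commute γ σ := by
    show γ * σ = σ * γ
    rw [hJ]
    calc σ * u * σ = σ * (u * σ) := by rw [mul_assoc]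
      _ = σ * (σ * u) := by rw [← hJ']
      _ = σ * (σ * u) := rfl
  -- basic closure facts for T
  have hTmem : ∀ a : GL4, a ∈ T ↔ IsUnipRad c a ∧ Commute a σ := fun a => Iff.rfl
  have hTmul : ∀ a b : GL4, a ∈ T → b ∈ T → a * b ∈ T := by
    rintro a b ⟨ha1, ha2⟩ ⟨hb1, hb2⟩
    exact ⟨isUnipRad_mul c ha1 hb1, Commute.mul_left ha2 hb2⟩
  have hTinv : ∀ a : GL4, a ∈ T → a⁻¹ ∈ T := by
    rintro a ⟨ha1, ha2⟩
    exact ⟨isUnipRad_inv c ha1, Commute.inv_left ha2⟩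
  have hT1 : (1 : GL4) ∈ T := ⟨isUnipRad_one c, Commute.one_left σ⟩
  have hTconj : ∀ a : GL4, a ∈ T → γ⁻¹ * a * γ ∈ T := by
    rintro a ⟨ha1, ha2⟩
    refine ⟨isUnipRad_conj c hγ ha1, ?_⟩
    exact Commute.mul_left (Commute.mul_left hγσ.inv_left ha2) hγσ
  -- F maps D × T into Nset
  have hFmaps : ∀ p : GL4 × GL4, p.1 ∈ D → p.2 ∈ T → F p ∈ Nset := by
    rintro ⟨δ, η⟩ hδ ⟨hη1, _⟩
    have hδu : IsUnipRad c δ := hD hδ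
    have h1 : IsUnipRad c (γ⁻¹ * δ⁻¹ * γ) := by
      have := isUnipRad_conj c hγ (isUnipRad_inv c hδu)
      convert this using 2
      done
    exact isUnipRad_mul c (isUnipRad_mul c h1 hη1) hδu
  -- the defining property: if F(δ,η) = n then η is determined by δ and n
  have hsolve : ∀ δ η n : GL4, F (δ, η) = n → η = γ⁻¹ * δ * γ * n * δ⁻¹ := by
    intro δ η n h
    have : γ⁻¹ * δ⁻¹ * γ * η * δ = n := h
    rw [← this]
    group
  have hsolve' : ∀ δ n : GL4, F (δ, γ⁻¹ * δ * γ * n * δ⁻¹) = n := by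
    intro δ n
    show γ⁻¹ * δ⁻¹ * γ * (γ⁻¹ * δ * γ * n * δ⁻¹) * δ = n
    group
  -- injectivity of F on D × T
  have hFinj : Set.InjOn F (D ×ˢ T) := by
    rintro ⟨δ, η⟩ ⟨hδ, hη⟩ ⟨δ', η'⟩ ⟨hδ', hη'⟩ heq
    set n : GL4 := F (δ, η) with hn
    have hn' : F (δ', η') = n := heq.symm
    have he1 : η = γ⁻¹ * δ * γ * n * δ⁻¹ := hsolve δ η n rfl
    have he2 : η' = γ⁻¹ * δ' * γ * n * δ'⁻¹ := hsolve δ' η' n hn'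
    have hnu : IsUnipRad c n := by
      have := hFmaps (δ, η) hδ hη
      exact this
    have hδu : IsUnipRad c δ := hD hδ
    have hδ'u : IsUnipRad c δ' := hD hδ'
    have hc1 : (γ⁻¹ * δ * γ * n * δ⁻¹) * σ = σ * (γ⁻¹ * δ * γ * n * δ⁻¹) := by
      rw [← he1]; exact hη.2
    have hc2 : (γ⁻¹ * δ' * γ * n * δ'⁻¹) * σ = σ * (γ⁻¹ * δ' * γ * n * δ'⁻¹) := by
      rw [← he2]; exact hη'.2
    obtain ⟨hθu, hθc⟩ := Huniq n δ δ' hnu hδu hδ'u hc1 hc2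
    -- apply uniqueness of the coset representative to δ
    have hδδ' : δ = δ' := by
      obtain ⟨d, _, hdu⟩ := hD' δ hδu
      have h1 : δ ∈ D ∧ ∃ η : GL4, IsUnipRad c η ∧ η * σ = σ * η ∧ δ = η * δ :=
        ⟨hδ, 1, isUnipRad_one c, by group, by group⟩
      have h2 : δ' ∈ D ∧ ∃ η : GL4, IsUnipRad c η ∧ η * σ = σ * η ∧ δ = η * δ' := by
        refine ⟨hδ', (δ' * δ⁻¹)⁻¹, isUnipRad_inv c hθu, (Commute.inv_left hθc : _), by group⟩
      rw [hdu δ h1, hdu δ' h2]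
    subst hδδ'
    have : η = η' := by rw [he1, he2]
    rw [this]
  -- surjectivity of F from D × T onto Nset
  have hFsurj : ∀ n : GL4, n ∈ Nset → ∃ p : GL4 × GL4, p.1 ∈ D ∧ p.2 ∈ T ∧ F p = n := by
    intro n hn
    obtain ⟨δ₀, hδ₀u, hδ₀c⟩ := Hex n hn
    obtain ⟨d, ⟨hdD, η₂, hη₂u, hη₂c, hδ₀d⟩, _⟩ := hD' δ₀ hδ₀u
    refine ⟨(d, γ⁻¹ * d * γ * n * d⁻¹), hdD, ⟨?_, ?_⟩, hsolve' d n⟩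
    · have hdu : IsUnipRad c d := hD hdD
      have h1 : IsUnipRad c (γ⁻¹ * d * γ) := isUnipRad_conj c hγ hdu
      exact isUnipRad_mul c (isUnipRad_mul c h1 hn) (isUnipRad_inv c hdu)
    · -- commutation: rewrite via δ₀ = η₂ * d
      have hkey : γ⁻¹ * d * γ * n * d⁻¹
          = (γ⁻¹ * η₂⁻¹ * γ) * (γ⁻¹ * δ₀ * γ * n * δ₀⁻¹) * η₂ := by
        rw [hδ₀d]
        group
      show (γ⁻¹ * d * γ * n * d⁻¹) * σ = σ * (γ⁻¹ * d * γ * n * d⁻¹)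
      rw [hkey]
      have c1 : Commute (γ⁻¹ * η₂⁻¹ * γ) σ := by
        have := hTconj η₂⁻¹ (hTinv η₂ ⟨hη₂u, hη₂c⟩)
        exact this.2
      have c2 : Commute (γ⁻¹ * δ₀ * γ * n * δ₀⁻¹) σ := hδ₀c
      have c3 : Commute η₂ σ := hη₂c
      exact Commute.mul_left (Commute.mul_left c1 c2) c3
  have hBij : Set.BijOn F (D ×ˢ T) Nset := by
    refine ⟨?_, hFinj, ?_⟩
    · rintro ⟨δ, η⟩ ⟨hδ, hη⟩
      exact hFmaps (δ, η) hδ hη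
    · intro n hn
      obtain ⟨p, hp1, hp2, hp3⟩ := hFsurj n hn
      exact ⟨p, ⟨hp1, hp2⟩, hp3⟩
  -- the support set
  set S : Set (GL4 × GL4) := {p : GL4 × GL4 | p.1 ∈ D ∧ (IsUnipRad c p.2 ∧ p.2 * σ = σ * p.2) ∧
      φ (γ⁻¹ * p.1⁻¹ * γ * p.2 * p.1) ≠ 0} with hS
  have hSsub : S ⊆ D ×ˢ T := by
    rintro ⟨δ, η⟩ ⟨h1, h2, _⟩
    exact ⟨h1, h2⟩
  have hSeq : S = (D ×ˢ T) ∩ Function.support (fun p => φ (F p)) := by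
    ext ⟨δ, η⟩
    constructor
    · rintro ⟨h1, h2, h3⟩
      exact ⟨⟨h1, h2⟩, h3⟩
    · rintro ⟨⟨h1, h2⟩, h3⟩
      exact ⟨h1, h2, h3⟩
  have hSfin : S.Finite := by
    apply Set.Finite.of_finite_image (f := F)
    · apply hφ.subset
      rintro x ⟨p, hp, rfl⟩
      exact hp.2.2
    · exact hFinj.mono hSsub
  refine ⟨hSfin, ?_⟩
  -- now the summation identity
  have hfin2 : ((D ×ˢ T) ∩ Function.support (fun p => φ (F p))).Finite := by
    rw [← hSeq]; exact hSfin
  set Fin : Finset (GL4 × GL4) := hfin2.toFinset with hFin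
  set Fa : Finset GL4 := Fin.image Prod.fst with hFa
  set Fb : GL4 → Finset GL4 := fun δ => (Fin.filter (fun p => p.1 = δ)).image Prod.snd
    with hFb
  have hFinmem : ∀ p : GL4 × GL4, p ∈ Fin ↔ p.1 ∈ D ∧ p.2 ∈ T ∧ φ (F p) ≠ 0 := by
    intro p
    rw [hFin, Set.Finite.mem_toFinset]
    constructor
    · rintro ⟨⟨h1, h2⟩, h3⟩; exact ⟨h1, h2, h3⟩
    · rintro ⟨h1, h2, h3⟩; exact ⟨⟨h1, h2⟩, h3⟩
  -- inner sums
  have hinner : ∀ δ : GL4, δ ∈ D →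
      (∑ᶠ η ∈ T, φ (γ⁻¹ * δ⁻¹ * γ * η * δ)) = ∑ η ∈ Fb δ, φ (F (δ, η)) := by
    intro δ hδ
    apply finsum_mem_eq_sum_of_subset
    · rintro η ⟨hη, hsupp⟩
      show η ∈ Finset.image Prod.snd (Finset.filter (fun p => p.1 = δ) Fin)
      exact Finset.mem_image.mpr ⟨(δ, η),
        Finset.mem_filter.mpr ⟨(hFinmem (δ, η)).mpr ⟨hδ, hη, hsupp⟩, rfl⟩, rfl⟩
    · intro η hη
      have hη' : η ∈ Finset.image Prod.snd (Finset.filter (fun p => p.1 = δ) Fin) :=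
        Finset.mem_coe.mp hη
      obtain ⟨p, hp, hp2⟩ := Finset.mem_image.mp hη'
      obtain ⟨hpFin, hp1⟩ := Finset.mem_filter.mp hp
      have := (hFinmem p).mp hpFin
      rw [← hp2]
      exact this.2.1
  -- outer sum
  have houter : (∑ᶠ δ ∈ D, ∑ᶠ η ∈ T, φ (γ⁻¹ * δ⁻¹ * γ * η * δ))
      = ∑ δ ∈ Fa, ∑ᶠ η ∈ T, φ (γ⁻¹ * δ⁻¹ * γ * η * δ) := by
    apply finsum_mem_eq_sum_of_subset
    · rintro δ ⟨hδ, hsupp⟩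
      rw [Function.mem_support] at hsupp
      -- the inner sum is nonzero, so some term is nonzero
      by_contra hnot
      apply hsupp
      apply finsum_mem_of_eqOn_zero
      intro η hη
      by_contra hval
      apply hnot
      rw [hFa]
      exact Finset.mem_image.mpr ⟨(δ, η), (hFinmem (δ, η)).mpr ⟨hδ, hη, hval⟩, rfl⟩
    · intro δ hδ
      have hδ' : δ ∈ Finset.image Prod.fst Fin := Finset.mem_coe.mp hδ
      obtain ⟨p, hp, hp1⟩ := Finset.mem_image.mp hδ'
      rw [← hp1]
      exact ((hFinmem p).mp hp).1
  -- product structure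
  have hprodmem : ∀ p : GL4 × GL4, p ∈ Fin ↔ p.1 ∈ Fa ∧ p.2 ∈ Fb p.1 := by
    intro p
    constructor
    · intro hp
      constructor
      · rw [hFa]; exact Finset.mem_image.mpr ⟨p, hp, rfl⟩
      · show p.2 ∈ Finset.image Prod.snd (Finset.filter (fun q => q.1 = p.1) Fin)
        exact Finset.mem_image.mpr ⟨p, Finset.mem_filter.mpr ⟨hp, rfl⟩, rfl⟩
    · rintro ⟨h1, h2⟩
      have h2' : p.2 ∈ Finset.image Prod.snd (Finset.filter (fun q => q.1 = p.1) Fin) := h2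
      obtain ⟨q, hq, hq2⟩ := Finset.mem_image.mp h2'
      obtain ⟨hqFin, hq1⟩ := Finset.mem_filter.mp hq
      have : q = p := Prod.ext hq1 hq2
      rw [← this]
      exact hqFin
  have hprod := Finset.sum_finset_product' (f := fun δ η => φ (F (δ, η))) Fin Fa Fb hprodmem
  have hprodeq : ∑ p ∈ Fin, φ (F p) = ∑ δ ∈ Fa, ∑ η ∈ Fb δ, φ (F (δ, η)) := by
    rw [← hprod]
  -- total
  calc (∑ᶠ δ ∈ D, ∑ᶠ η ∈ T, φ (γ⁻¹ * δ⁻¹ * γ * η * δ))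
      = ∑ δ ∈ Fa, ∑ᶠ η ∈ T, φ (γ⁻¹ * δ⁻¹ * γ * η * δ) := houter
    _ = ∑ δ ∈ Fa, ∑ η ∈ Fb δ, φ (F (δ, η)) := by
        apply Finset.sum_congr rfl
        intro δ hδ
        have hδD : δ ∈ D := by
          rw [hFa] at hδ
          obtain ⟨p, hp, hp1⟩ := Finset.mem_image.mp hδ
          rw [← hp1]
          exact ((hFinmem p).mp hp).1
        exact hinner δ hδD
    _ = ∑ p ∈ Fin, φ (F p) := hprodeq.symm
    _ = ∑ᶠ p ∈ D ×ˢ T, φ (F p) := (finsum_mem_eq_sum _ hfin2).symm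
    _ = ∑ᶠ n ∈ Nset, φ n := finsum_mem_eq_of_bijOn F hBij (fun x _ => rfl)
end

section
/- Let P = MN be the standard parabolic subgroup of GL(4, ℚ) associated to a composition (n₁, …, n_k) of 4, and let A be the split component of M. Suppose γ₁, γ₂ ∈ M are such that, for i = 1, 2, each of the k diagonal blocks of γᵢ has characteristic polynomial irreducible over ℚ, and the characteristic polynomial of γᵢ is squarefree. If δ₁, δ₂ ∈ GL(4, ℚ) satisfy δ₁⁻¹γ₁δ₁ = δ₂⁻¹γ₂δ₂, then δ₁δ₂⁻¹ lies in the normalizer of A in GL(4, ℚ); equivalently, δ₁δ₂⁻¹ ∈ M·w for some representative w of an element of the quotient of the normalizer of A in GL(4, ℚ) by M. -/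
/-- Membership in the split component `A` of the Levi subgroup `M`: diagonal matrices whose
diagonal entries are constant on each block of the composition `c`. -/
def IsSplit (c : Composition 4) (a : GL4) : Prop :=
  (∀ i j : Fin 4, i ≠ j → (a : Matrix (Fin 4) (Fin 4) ℚ) i j = 0) ∧
  (∀ i j : Fin 4, c.index i = c.index j →
    (a : Matrix (Fin 4) (Fin 4) ℚ) i i = (a : Matrix (Fin 4) (Fin 4) ℚ) j j)

/-- The `i`-th diagonal block of `g`, for the composition `c`. -/
def blockOf (c : Composition 4) (g : GL4) (i : Fin c.length) :
    Matrix (Fin (c.blocksFun i)) (Fin (c.blocksFun i)) ℚ :=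
  Matrix.of fun a b => (g : Matrix (Fin 4) (Fin 4) ℚ) (c.embedding i a) (c.embedding i b)


section Aux

open Polynomial Matrix

variable (c : Composition 4)

/-- Matrix-level Levi condition as a subalgebra. -/
def leviSubalg : Subalgebra ℚ (Matrix (Fin 4) (Fin 4) ℚ) where
  carrier := {g | ∀ i j : Fin 4, c.index i ≠ c.index j → g i j = 0}
  mul_mem' := by
    intro x y hx hy i j hij
    show ∑ k, x i k * y k j = 0
    refine Finset.sum_eq_zero fun k _ => ?_
    by_cases hk : c.index i = c.index k
    · rw [hy k j (hk ▸ hij), mul_zero]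
    · rw [hx i k hk, zero_mul]
  add_mem' := by
    intro x y hx hy i j hij
    show x i j + y i j = 0
    rw [hx i j hij, hy i j hij, add_zero]
  algebraMap_mem' := by
    intro r i j hij
    have : i ≠ j := fun h => hij (h ▸ rfl)
    simp [Matrix.algebraMap_matrix_apply, this]
  one_mem' := by
    intro i j hij
    have : i ≠ j := fun h => hij (h ▸ rfl)
    simp [Matrix.one_apply, this]

/-- Matrix-level block extraction. -/
def blockM (m : Matrix (Fin 4) (Fin 4) ℚ) (i : Fin c.length) :
    Matrix (Fin (c.blocksFun i)) (Fin (c.blocksFun i)) ℚ :=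
  Matrix.of fun a b => m (c.embedding i a) (c.embedding i b)

lemma embedding_injective (i : Fin c.length) :
    Function.Injective (c.embedding i) := (c.embedding i).injective

/-- Block extraction as an algebra hom on the Levi subalgebra. -/
def blockOfHom (i : Fin c.length) :
    leviSubalg c →ₐ[ℚ] Matrix (Fin (c.blocksFun i)) (Fin (c.blocksFun i)) ℚ where
  toFun g := blockM c (g : Matrix (Fin 4) (Fin 4) ℚ) i
  map_one' := by
    ext a b
    simp only [blockM, Matrix.of_apply]
    show (1 : Matrix (Fin 4) (Fin 4) ℚ) _ _ = (1 : Matrix (Fin (c.blocksFun i)) _ ℚ) a b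
    rw [Matrix.one_apply, Matrix.one_apply]
    simp [ (embedding_injective c i).eq_iff ]
  map_mul' := by
    intro x y
    ext a b
    show ((x : Matrix (Fin 4) (Fin 4) ℚ) * y) (c.embedding i a) (c.embedding i b)
      = ∑ k, blockM c x i a k * blockM c y i k b
    rw [Matrix.mul_apply]
    have hvan : ∀ k ∈ Finset.univ, k ∉ Finset.image (c.embedding i) Finset.univ →
        (x : Matrix (Fin 4) (Fin 4) ℚ) (c.embedding i a) k *
          (y : Matrix (Fin 4) (Fin 4) ℚ) k (c.embedding i b) = 0 := by
      intro k _ hk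
      have hkr : k ∉ Set.range (c.embedding i) := by
        intro ⟨w, hw⟩
        exact hk (Finset.mem_image.mpr ⟨w, Finset.mem_univ w, hw⟩)
      have hik : c.index (c.embedding i a) ≠ c.index k := by
        rw [c.index_embedding]
        intro hik
        exact hkr ((c.mem_range_embedding_iff').mpr hik)
      rw [x.2 _ k hik, zero_mul]
    rw [← Finset.sum_subset (Finset.subset_univ _) hvan,
      Finset.sum_image (fun u _ v _ h => embedding_injective c i h)]
    rfl
  map_zero' := by ext a b; rfl
  map_add' := by intro x y; ext a b; rfl
  commutes' := by
    intro r
    ext a b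
    simp only [blockM, Matrix.of_apply]
    show algebraMap ℚ (Matrix (Fin 4) (Fin 4) ℚ) r _ _ = _
    rw [Matrix.algebraMap_matrix_apply, Matrix.algebraMap_matrix_apply]
    simp [(embedding_injective c i).eq_iff]

/-- The blocks of the composition partition `Fin 4`. -/
noncomputable def blockIndexEquiv (i : Fin c.length) :
    Fin (c.blocksFun i) ≃ {j : Fin 4 // c.index j = i} :=
  Equiv.ofBijective (fun b => ⟨c.embedding i b, c.index_embedding i b⟩)
    ⟨fun u v huv => embedding_injective c i (congrArg Subtype.val huv),
     fun j => by
      obtain ⟨b, hb⟩ := (c.mem_range_embedding_iff').mpr j.2.symm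
      exact ⟨b, Subtype.ext hb⟩⟩

lemma charpoly_eq_prod_blocks (m : Matrix (Fin 4) (Fin 4) ℚ) (hm : m ∈ leviSubalg c) :
    m.charpoly = ∏ i : Fin c.length, (blockM c m i).charpoly := by
  have hbt : m.BlockTriangular c.index := fun i j hij => hm i j (ne_of_gt hij)
  rw [hbt.charpoly]
  refine Finset.prod_congr (Finset.eq_univ_of_forall fun i => by
    simp only [Finset.mem_image]
    exact ⟨c.embedding i ⟨0, c.one_le_blocksFun i⟩, Finset.mem_univ _, c.index_embedding i _⟩)
    fun i _ => ?_
  have : blockM c m i =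
      Matrix.reindex (blockIndexEquiv c i).symm (blockIndexEquiv c i).symm
        (m.toSquareBlock c.index i) := by
    ext a b
    simp [blockM, Matrix.toSquareBlock_def, blockIndexEquiv]
    rfl
  rw [this, Matrix.charpoly_reindex]

lemma ext_of_levi (m m' : Matrix (Fin 4) (Fin 4) ℚ) (hm : m ∈ leviSubalg c)
    (hm' : m' ∈ leviSubalg c) (hb : ∀ i, blockM c m i = blockM c m' i) : m = m' := by
  ext i j
  by_cases hij : c.index i = c.index j
  · obtain ⟨a, ha⟩ := c.mem_range_embedding i
    obtain ⟨b, hbj⟩ := (c.mem_range_embedding_iff' (i := c.index i)).mpr hij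
    have := congrFun (congrFun (hb (c.index i)) a) b
    simpa [blockM, ha, hbj] using this
  · rw [hm i j hij, hm' i j hij]

lemma aeval_val (m : Matrix (Fin 4) (Fin 4) ℚ) (hm : m ∈ leviSubalg c) (f : ℚ[X]) :
    aeval m f = ((aeval (⟨m, hm⟩ : leviSubalg c) f : leviSubalg c) :
      Matrix (Fin 4) (Fin 4) ℚ) := by
  simpa using (Polynomial.aeval_algHom_apply (Subalgebra.val (leviSubalg c)) ⟨m, hm⟩ f).symm

lemma levi_aeval (m : Matrix (Fin 4) (Fin 4) ℚ) (hm : m ∈ leviSubalg c) (f : ℚ[X]) :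
    aeval m f ∈ leviSubalg c := by
  rw [aeval_val c m hm f]
  exact (aeval (⟨m, hm⟩ : leviSubalg c) f).2

lemma blockM_aeval (m : Matrix (Fin 4) (Fin 4) ℚ) (hm : m ∈ leviSubalg c) (f : ℚ[X])
    (i : Fin c.length) : blockM c (aeval m f) i = aeval (blockM c m i) f := by
  have h2 : blockM c ((aeval (⟨m, hm⟩ : leviSubalg c) f : leviSubalg c) :
      Matrix (Fin 4) (Fin 4) ℚ) i = blockOfHom c i (aeval (⟨m, hm⟩ : leviSubalg c) f) := rfl
  rw [aeval_val c m hm f, h2, ← Polynomial.aeval_algHom_apply (blockOfHom c i)]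
  rfl

lemma conj_aeval (D : (Matrix (Fin 4) (Fin 4) ℚ)ˣ) (m : Matrix (Fin 4) (Fin 4) ℚ) (f : ℚ[X]) :
    (D : Matrix (Fin 4) (Fin 4) ℚ) * aeval m f * ((D⁻¹ : (Matrix (Fin 4) (Fin 4) ℚ)ˣ) :
      Matrix (Fin 4) (Fin 4) ℚ) =
    aeval ((D : Matrix (Fin 4) (Fin 4) ℚ) * m *
      ((D⁻¹ : (Matrix (Fin 4) (Fin 4) ℚ)ˣ) : Matrix (Fin 4) (Fin 4) ℚ)) f := by
  induction f using Polynomial.induction_on with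
  | C r =>
    simp only [Polynomial.aeval_C]
    rw [mul_assoc, Algebra.commutes r, ← mul_assoc, Units.mul_inv, one_mul]
  | add p q hp hq =>
    simp only [map_add, mul_add, add_mul, hp, hq]
  | monomial n r hn =>
    have e2 : ∀ x : Matrix (Fin 4) (Fin 4) ℚ,
        aeval x (Polynomial.C r * Polynomial.X ^ (n + 1)) =
          aeval x (Polynomial.C r * Polynomial.X ^ n) * x := by
      intro x
      rw [pow_succ, ← mul_assoc, _root_.map_mul, Polynomial.aeval_X]
    rw [e2, e2, ← hn]
    symm
    calc (↑D * aeval m (Polynomial.C r * Polynomial.X ^ n) * (↑D⁻¹ : Matrix (Fin 4) (Fin 4) ℚ)) *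
          ((↑D : Matrix (Fin 4) (Fin 4) ℚ) * m * ↑D⁻¹)
        = ↑D * aeval m (Polynomial.C r * Polynomial.X ^ n) *
            (((↑D⁻¹ : Matrix (Fin 4) (Fin 4) ℚ) * ↑D) * (m * ↑D⁻¹)) := by
          simp only [mul_assoc]
      _ = ↑D * (aeval m (Polynomial.C r * Polynomial.X ^ n) * m) * ↑D⁻¹ := by
          rw [Units.inv_mul, one_mul]
          simp only [mul_assoc]

lemma charpoly_conj (D : (Matrix (Fin 4) (Fin 4) ℚ)ˣ) (m : Matrix (Fin 4) (Fin 4) ℚ) :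
    ((D : Matrix (Fin 4) (Fin 4) ℚ) * m *
      ((D⁻¹ : (Matrix (Fin 4) (Fin 4) ℚ)ˣ) : Matrix (Fin 4) (Fin 4) ℚ)).charpoly = m.charpoly := by
  set d := (D : Matrix (Fin 4) (Fin 4) ℚ) with hd
  set d' := ((D⁻¹ : (Matrix (Fin 4) (Fin 4) ℚ)ˣ) : Matrix (Fin 4) (Fin 4) ℚ) with hd'
  set Cd := (Polynomial.C : ℚ →+* ℚ[X]).mapMatrix d with hCd
  set Cd' := (Polynomial.C : ℚ →+* ℚ[X]).mapMatrix d' with hCd'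
  have hdd : Cd * Cd' = 1 := by
    rw [hCd, hCd', ← _root_.map_mul, hd, hd', Units.mul_inv, _root_.map_one]
  have hsc : Cd * Matrix.scalar (Fin 4) Polynomial.X = Matrix.scalar (Fin 4) Polynomial.X * Cd :=
    (Matrix.scalar_commute Polynomial.X (fun r' => Commute.all _ r') Cd).symm
  have hC : Matrix.charmatrix (d * m * d') =
      Cd * m.charmatrix * Cd' := by
    rw [Matrix.charmatrix, Matrix.charmatrix, mul_sub, sub_mul]
    congr 1
    · rw [hsc, mul_assoc, hdd, mul_one]
    · rw [_root_.map_mul, _root_.map_mul]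
  rw [Matrix.charpoly, Matrix.charpoly, hC, Matrix.det_mul, Matrix.det_mul, mul_right_comm,
    ← Matrix.det_mul, hdd, Matrix.det_one, one_mul]

lemma split_of_scalar_blocks (F : Matrix (Fin 4) (Fin 4) ℚ) (hF : F ∈ leviSubalg c)
    (hb : ∀ j : Fin c.length, ∃ r : ℚ, blockM c F j = r • (1 : Matrix (Fin (c.blocksFun j)) (Fin (c.blocksFun j)) ℚ)) :
    (∀ i j : Fin 4, i ≠ j → F i j = 0) ∧
    (∀ i j : Fin 4, c.index i = c.index j → F i i = F j j) := by
  constructor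
  · intro i j hij
    by_cases hc : c.index i = c.index j
    · obtain ⟨a', ha'⟩ := c.mem_range_embedding i
      obtain ⟨b', hb'⟩ := (c.mem_range_embedding_iff' (i := c.index i)).mpr hc
      obtain ⟨r, hr⟩ := hb (c.index i)
      have h1 : blockM c F (c.index i) a' b' = F i j := by rw [blockM]; simp [ha', hb']
      have hab : a' ≠ b' := fun hab => hij (by rw [← ha', ← hb', hab])
      rw [hr] at h1
      rw [← h1]
      simp [Matrix.smul_apply, Matrix.one_apply, hab]
    · exact hF i j hc
  · intro i j hc
    obtain ⟨a', ha'⟩ := c.mem_range_embedding i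
    obtain ⟨b', hb'⟩ := (c.mem_range_embedding_iff' (i := c.index i)).mpr hc
    obtain ⟨r, hr⟩ := hb (c.index i)
    have h1 : blockM c F (c.index i) a' a' = F i i := by rw [blockM]; simp [ha']
    have h2 : blockM c F (c.index i) b' b' = F j j := by rw [blockM]; simp [hb']
    rw [hr] at h1 h2
    rw [← h1, ← h2]
    simp [Matrix.smul_apply, Matrix.one_apply]

lemma key_conj (c : Composition 4) (γ₁ γ₂ : GL4)
    (hγ₁ : IsLevi c γ₁) (hγ₂ : IsLevi c γ₂)
    (hirr₁ : ∀ i : Fin c.length, Irreducible (blockOf c γ₁ i).charpoly)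
    (hirr₂ : ∀ i : Fin c.length, Irreducible (blockOf c γ₂ i).charpoly)
    (hsq₂ : Squarefree ((γ₂ : Matrix (Fin 4) (Fin 4) ℚ).charpoly))
    (D : GL4) (hD : γ₁ * D = D * γ₂)
    (a : GL4) (ha : IsSplit c a) : IsSplit c (D * a * D⁻¹) := by
  classical
  set g1 := (γ₁ : Matrix (Fin 4) (Fin 4) ℚ) with hg1def
  set g2 := (γ₂ : Matrix (Fin 4) (Fin 4) ℚ) with hg2def
  have hγ₁' : g1 ∈ leviSubalg c := fun i j hij => hγ₁ i j hij
  have hγ₂' : g2 ∈ leviSubalg c := fun i j hij => hγ₂ i j hij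
  -- conjugation at the matrix level
  have hg1u : γ₁ = D * γ₂ * D⁻¹ := by rw [← hD, mul_inv_cancel_right]
  have hconj : g1 = (D : Matrix (Fin 4) (Fin 4) ℚ) * g2 *
      ((D⁻¹ : GL4) : Matrix (Fin 4) (Fin 4) ℚ) := by
    rw [hg1def, hg1u, Units.val_mul, Units.val_mul]
  -- the block characteristic polynomials
  set p : Fin c.length → Polynomial ℚ := fun i => (blockM c g2 i).charpoly with hp
  set q : Fin c.length → Polynomial ℚ := fun j => (blockM c g1 j).charpoly with hq
  have hirr₂' : ∀ i, Irreducible (p i) := hirr₂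
  have hirr₁' : ∀ j, Irreducible (q j) := hirr₁
  have hmonp : ∀ i, (p i).Monic := fun i => Matrix.charpoly_monic _
  have hmonq : ∀ j, (q j).Monic := fun j => Matrix.charpoly_monic _
  have hP : g1.charpoly = g2.charpoly := by rw [hconj, charpoly_conj]
  have hprod2 : g2.charpoly = ∏ i, p i := charpoly_eq_prod_blocks c g2 hγ₂'
  have hprod1 : g1.charpoly = ∏ j, q j := charpoly_eq_prod_blocks c g1 hγ₁'
  -- the p i are pairwise distinct and coprime
  have hne : ∀ i j, i ≠ j → p i ≠ p j := by
    intro i j hij hpe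
    have hdvd : p i * p j ∣ g2.charpoly := by
      rw [hprod2, ← Finset.mul_prod_erase _ _ (Finset.mem_univ i)]
      exact mul_dvd_mul_left _
        (Finset.dvd_prod_of_mem _ (Finset.mem_erase.mpr ⟨hij.symm, Finset.mem_univ j⟩))
    rw [← hpe] at hdvd
    exact (hirr₂' i).not_isUnit (hsq₂ _ hdvd)
  have hcop : ∀ i j, i ≠ j → IsCoprime (p i) (p j) := by
    intro i j hij
    refine (hirr₂' i).coprime_iff_not_dvd.mpr fun hdvd => hne i j hij ?_
    exact Polynomial.eq_of_monic_of_associated (hmonp i) (hmonp j)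
      ((hirr₂' i).associated_of_dvd (hirr₂' j) hdvd)
  -- CRT idempotent-like elements
  have hwex : ∀ i, ∃ w : Polynomial ℚ, p i ∣ (1 - w) ∧ ∀ j, j ≠ i → p j ∣ w := by
    intro i
    have hcp : IsCoprime (p i) (∏ j ∈ Finset.univ.erase i, p j) :=
      IsCoprime.prod_right fun j hj => hcop i j (Finset.ne_of_mem_erase hj).symm
    obtain ⟨u, v, huv⟩ := hcp
    refine ⟨v * ∏ j ∈ Finset.univ.erase i, p j, ⟨u, by linear_combination huv.symm⟩,
      fun j hj => Dvd.dvd.mul_left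
        (Finset.dvd_prod_of_mem _ (Finset.mem_erase.mpr ⟨hj, Finset.mem_univ _⟩)) v⟩
  choose w hw1 hw2 using hwex
  -- the diagonal values of a on each block
  set α : Fin c.length → ℚ := fun i =>
    (a : Matrix (Fin 4) (Fin 4) ℚ) (c.embedding i ⟨0, c.one_le_blocksFun i⟩)
      (c.embedding i ⟨0, c.one_le_blocksFun i⟩) with hα
  set f : Polynomial ℚ := ∑ i, Polynomial.C (α i) * w i with hf
  -- evaluating f on any block whose charpoly is p i gives the scalar α i
  have heval : ∀ (j : Fin c.length) (m : Matrix (Fin 4) (Fin 4) ℚ) (i : Fin c.length),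
      (blockM c m j).charpoly = p i →
      aeval (blockM c m j) f =
        (α i) • (1 : Matrix (Fin (c.blocksFun j)) (Fin (c.blocksFun j)) ℚ) := by
    intro j m i hqc
    set B := blockM c m j with hB
    have hchar : aeval B (p i) = 0 := by rw [← hqc]; exact Matrix.aeval_self_charpoly B
    rw [hf, map_sum, Finset.sum_eq_single i]
    · rw [_root_.map_mul, Polynomial.aeval_C]
      have h1 : aeval B (1 - w i) = 0 := by
        obtain ⟨t, ht⟩ := hw1 i
        rw [ht, _root_.map_mul, hchar, zero_mul]
      rw [map_sub, _root_.map_one] at h1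
      rw [sub_eq_zero] at h1
      rw [← h1, mul_one, Algebra.algebraMap_eq_smul_one]
    · intro k _ hki
      obtain ⟨t, ht⟩ := hw2 k i hki.symm
      rw [_root_.map_mul, ht, _root_.map_mul, hchar, zero_mul, mul_zero]
    · intro hnot
      exact absurd (Finset.mem_univ i) hnot
  -- a = f(γ₂) as matrices
  have ham : (a : Matrix (Fin 4) (Fin 4) ℚ) ∈ leviSubalg c := by
    intro i j hij
    exact ha.1 i j (fun hij' => hij (by rw [hij']))
  have hablock : ∀ i, blockM c (a : Matrix (Fin 4) (Fin 4) ℚ) i =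
      (α i) • (1 : Matrix (Fin (c.blocksFun i)) (Fin (c.blocksFun i)) ℚ) := by
    intro i
    ext a' b'
    by_cases hab : a' = b'
    · subst hab
      have := ha.2 (c.embedding i a') (c.embedding i ⟨0, c.one_le_blocksFun i⟩)
        (by rw [c.index_embedding, c.index_embedding])
      simp only [blockM, Matrix.of_apply]
      rw [this]
      simp [Matrix.smul_apply, Matrix.one_apply, hα]
    · have hne' : c.embedding i a' ≠ c.embedding i b' :=
        fun hh => hab (embedding_injective c i hh)
      simp only [blockM, Matrix.of_apply]
      rw [ha.1 _ _ hne']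
      simp [Matrix.smul_apply, Matrix.one_apply, hab]
  have haf : (a : Matrix (Fin 4) (Fin 4) ℚ) = aeval g2 f := by
    refine ext_of_levi c _ _ ham (levi_aeval c g2 hγ₂' f) fun i => ?_
    rw [hablock i, blockM_aeval c g2 hγ₂' f i]
    exact (heval i g2 i rfl).symm
  -- D a D⁻¹ = f(γ₁)
  have hval : ((D * a * D⁻¹ : GL4) : Matrix (Fin 4) (Fin 4) ℚ) = aeval g1 f := by
    rw [Units.val_mul, Units.val_mul, haf, conj_aeval, ← hconj]
  -- f(γ₁) has scalar blocks
  have hscal : ∀ j : Fin c.length, ∃ r : ℚ, blockM c (aeval g1 f) j =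
      r • (1 : Matrix (Fin (c.blocksFun j)) (Fin (c.blocksFun j)) ℚ) := by
    intro j
    have hqd : q j ∣ ∏ i, p i := by
      rw [← hprod2, ← hP, hprod1]
      exact Finset.dvd_prod_of_mem _ (Finset.mem_univ j)
    obtain ⟨i, _, hdvd⟩ := (hirr₁' j).prime.exists_mem_finset_dvd hqd
    have hqp : q j = p i := Polynomial.eq_of_monic_of_associated (hmonq j) (hmonp i)
      ((hirr₁' j).associated_of_dvd (hirr₂' i) hdvd)
    exact ⟨α i, by rw [blockM_aeval c g1 hγ₁' f j]; exact heval j g1 i hqp⟩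
  have := split_of_scalar_blocks c (aeval g1 f) (levi_aeval c g1 hγ₁' f) hscal
  constructor
  · intro i j hij
    rw [hval]
    exact this.1 i j hij
  · intro i j hij
    rw [hval]
    exact this.2 i j hij

end Aux

/-- Lemma 6.5 of the paper: if `γ₁, γ₂ ∈ M` lie in an unramified orbit (each diagonal block
has irreducible characteristic polynomial over `ℚ`, and the characteristic polynomial is
squarefree) and `δ₁⁻¹ γ₁ δ₁ = δ₂⁻¹ γ₂ δ₂`, then `δ₁ δ₂⁻¹` normalizes the split component
`A` of `M`. -/
theorem conjugating_element_normalizes_split_component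
    (c : Composition 4) (γ₁ γ₂ : GL4)
    (hγ₁ : IsLevi c γ₁) (hγ₂ : IsLevi c γ₂)
    (hirr₁ : ∀ i : Fin c.length, Irreducible (blockOf c γ₁ i).charpoly)
    (hirr₂ : ∀ i : Fin c.length, Irreducible (blockOf c γ₂ i).charpoly)
    (hsq₁ : Squarefree ((γ₁ : Matrix (Fin 4) (Fin 4) ℚ).charpoly))
    (hsq₂ : Squarefree ((γ₂ : Matrix (Fin 4) (Fin 4) ℚ).charpoly))
    (δ₁ δ₂ : GL4) (h : δ₁⁻¹ * γ₁ * δ₁ = δ₂⁻¹ * γ₂ * δ₂) :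
    ∀ a : GL4, IsSplit c a →
      IsSplit c ((δ₁ * δ₂⁻¹) * a * (δ₁ * δ₂⁻¹)⁻¹) ∧
      IsSplit c ((δ₁ * δ₂⁻¹)⁻¹ * a * (δ₁ * δ₂⁻¹)) := by
  intro a ha
  have hD : γ₁ * (δ₁ * δ₂⁻¹) = (δ₁ * δ₂⁻¹) * γ₂ := by
    calc γ₁ * (δ₁ * δ₂⁻¹) = δ₁ * (δ₁⁻¹ * γ₁ * δ₁) * δ₂⁻¹ := by group
      _ = δ₁ * (δ₂⁻¹ * γ₂ * δ₂) * δ₂⁻¹ := by rw [h]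
      _ = (δ₁ * δ₂⁻¹) * γ₂ := by group
  refine ⟨key_conj c γ₁ γ₂ hγ₁ hγ₂ hirr₁ hirr₂ hsq₂ (δ₁ * δ₂⁻¹) hD a ha, ?_⟩
  have hD' : γ₂ * (δ₁ * δ₂⁻¹)⁻¹ = (δ₁ * δ₂⁻¹)⁻¹ * γ₁ := by
    calc γ₂ * (δ₁ * δ₂⁻¹)⁻¹ = (δ₁ * δ₂⁻¹)⁻¹ * ((δ₁ * δ₂⁻¹) * γ₂) * (δ₁ * δ₂⁻¹)⁻¹ := by group
      _ = (δ₁ * δ₂⁻¹)⁻¹ * (γ₁ * (δ₁ * δ₂⁻¹)) * (δ₁ * δ₂⁻¹)⁻¹ := by rw [hD]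
      _ = (δ₁ * δ₂⁻¹)⁻¹ * γ₁ := by group
  have := key_conj c γ₂ γ₁ hγ₂ hγ₁ hirr₂ hirr₁ hsq₁ (δ₁ * δ₂⁻¹)⁻¹ hD' a ha
  rwa [inv_inv] at this
end

section
/- For H = (h₁, h₂, h₃, h₄) ∈ ℝ⁴ define αⱼ(H) = hⱼ − hⱼ₊₁ for j = 1, 2, 3 and ϖ̂ⱼ(H) = (h₁ + ⋯ + hⱼ) − (j/4)(h₁ + h₂ + h₃ + h₄). Let S₂ ⊆ S₁ ⊆ {1, 2, 3} and let H ∈ ℝ⁴ satisfy αⱼ(H) = 0 for every j ∈ {1, 2, 3} with j ∉ S₁. Then the sum over all subsets S₃ of S₂ of (−1)^{|S₂| − |S₃|} times (the product over j ∈ S₁ ∖ S₃ of χ(αⱼ(H) > 0)) times (the product over j ∈ S₃ of χ(ϖ̂ⱼ(H) > 0)) equals (the product over j ∈ S₁ ∖ S₂ of χ(αⱼ(H) > 0)) times (the product over j ∈ S₂ of χ(αⱼ(H) ≤ 0)) times (the product over j ∈ S₂ of χ(ϖ̂ⱼ(H) > 0)). Here χ(·) denotes the indicator, equal to 1 if the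 condition holds and 0 otherwise. -/
/-- The simple roots of `GL(4)`: `α_j(H) = h_j − h_{j+1}` for `j = 1, 2, 3`
(indexed here by `j : Fin 3`, zero-based). -/
def simpleRoot (H : Fin 4 → ℝ) (j : Fin 3) : ℝ := H j.castSucc - H j.succ

/-- The fundamental coweights of `GL(4)`:
`ϖ̂_j(H) = (h₁ + ⋯ + h_j) − (j/4)(h₁ + h₂ + h₃ + h₄)` for `j = 1, 2, 3`
(indexed here by `j : Fin 3`, zero-based, so `j` corresponds to `j + 1`). -/
noncomputable def coweight (H : Fin 4 → ℝ) (j : Fin 3) : ℝ :=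
  (∑ i ∈ Finset.univ.filter (fun i : Fin 4 => (i : ℕ) ≤ (j : ℕ)), H i) -
    (((j : ℕ) : ℝ) + 1) / 4 * ∑ i : Fin 4, H i

private lemma fin3_mk_two (h : 2 < 3) : (⟨2, h⟩ : Fin 3) = 2 := rfl

set_option maxHeartbeats 2000000 in
private lemma core (a0 a1 a2 w0 w1 w2 : ℝ)
    (e0 : 4*w0 = 3*a0 + 2*a1 + a2) (e1 : 4*w1 = 2*a0 + 4*a1 + 2*a2)
    (e2 : 4*w2 = a0 + 2*a1 + 3*a2) (S₂ : Finset (Fin 3))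
    (h : ∀ j, j ∉ S₂ → 0 ≤ ![a0, a1, a2] j) :
    ∏ j ∈ S₂, ((if 0 < ![w0, w1, w2] j then (1:ℝ) else 0) - (if 0 < ![a0, a1, a2] j then (1:ℝ) else 0)) =
    (∏ j ∈ S₂, if ![a0, a1, a2] j ≤ 0 then (1:ℝ) else 0) *
      (∏ j ∈ S₂, if 0 < ![w0, w1, w2] j then (1:ℝ) else 0) := by
  have h0 : 0 ∉ S₂ → 0 ≤ a0 := fun hh => by simpa using h 0 hh
  have h1 : 1 ∉ S₂ → 0 ≤ a1 := fun hh => by simpa using h 1 hh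
  have h2 : 2 ∉ S₂ → 0 ≤ a2 := fun hh => by simpa using h 2 hh
  clear h
  fin_cases S₂ <;>
    simp only [Finset.prod_mk, Multiset.map_coe, Multiset.prod_coe, List.map_cons,
      List.map_nil, List.prod_cons, List.prod_nil, Matrix.cons_val_zero,
      Matrix.cons_val_one, Matrix.head_cons, Matrix.cons_val_fin_one, Matrix.cons_val',
      Fin.isValue, Fin.mk_one, Fin.mk_zero, fin3_mk_two, Matrix.cons_val_two, Matrix.tail_cons] <;>
    (try have k0 : 0 ≤ a0 := h0 (by decide)) <;>
    (try have k1 : 0 ≤ a1 := h1 (by decide)) <;>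
    (try have k2 : 0 ≤ a2 := h2 (by decide)) <;>
    clear h0 h1 h2 <;>
    by_cases u0 : 0 < w0 <;> by_cases u1 : 0 < w1 <;> by_cases u2 : 0 < w2 <;>
    by_cases v0 : 0 < a0 <;> by_cases v1 : 0 < a1 <;> by_cases v2 : 0 < a2 <;>
    (try simp only [← not_lt, u0, u1, u2, v0, v1, v2, if_true, if_false, not_true, not_false_eq_true]) <;>
    first
      | linarith
      | norm_num

private lemma cw0 (H : Fin 4 → ℝ) :
    4 * coweight H 0 = 3*simpleRoot H 0 + 2*simpleRoot H 1 + simpleRoot H 2 := by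
  rw [coweight, show Finset.univ.filter (fun i : Fin 4 => (i : ℕ) ≤ ((0 : Fin 3) : ℕ)) = {0} from by decide]
  simp [simpleRoot, Fin.sum_univ_four, show ((2:Fin 3).castSucc : Fin 4) = 2 from rfl,
    show ((2:Fin 3).succ : Fin 4) = 3 from rfl]
  ring

private lemma cw1 (H : Fin 4 → ℝ) :
    4 * coweight H 1 = 2*simpleRoot H 0 + 4*simpleRoot H 1 + 2*simpleRoot H 2 := by
  rw [coweight, show Finset.univ.filter (fun i : Fin 4 => (i : ℕ) ≤ ((1 : Fin 3) : ℕ)) = {0,1} from by decide]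
  simp [simpleRoot, Fin.sum_univ_four, show ((2:Fin 3).castSucc : Fin 4) = 2 from rfl,
    show ((2:Fin 3).succ : Fin 4) = 3 from rfl]
  ring

private lemma cw2 (H : Fin 4 → ℝ) :
    4 * coweight H 2 = simpleRoot H 0 + 2*simpleRoot H 1 + 3*simpleRoot H 2 := by
  rw [coweight, show Finset.univ.filter (fun i : Fin 4 => (i : ℕ) ≤ ((2 : Fin 3) : ℕ)) = {0,1,2} from by decide]
  simp [simpleRoot, Fin.sum_univ_four, show ((2:Fin 3).castSucc : Fin 4) = 2 from rfl,
    show ((2:Fin 3).succ : Fin 4) = 3 from rfl]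
  ring

private lemma vec_eq (f : Fin 3 → ℝ) : ∀ j : Fin 3, ![f 0, f 1, f 2] j = f j := by
  intro j
  fin_cases j <;> simp

/-- Arthur's Lemma 7.3 for `GL(4)` (the identification of the function `σ₁²` as a
characteristic function), with standard parabolic subgroups encoded by subsets
`S₂ ⊆ S₁ ⊆ {1, 2, 3}` of simple roots. -/
theorem sigma_fun_eq_characteristic_function
    (H : Fin 4 → ℝ) (S₁ S₂ : Finset (Fin 3)) (hS : S₂ ⊆ S₁)
    (hzero : ∀ j : Fin 3, j ∉ S₁ → simpleRoot H j = 0) :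
    ∑ S₃ ∈ S₂.powerset,
        (-1 : ℝ) ^ (S₂.card - S₃.card) *
          (∏ j ∈ S₁ \ S₃, if 0 < simpleRoot H j then (1 : ℝ) else 0) *
          (∏ j ∈ S₃, if 0 < coweight H j then (1 : ℝ) else 0) =
      (∏ j ∈ S₁ \ S₂, if 0 < simpleRoot H j then (1 : ℝ) else 0) *
        (∏ j ∈ S₂, if simpleRoot H j ≤ 0 then (1 : ℝ) else 0) *
        (∏ j ∈ S₂, if 0 < coweight H j then (1 : ℝ) else 0) := by
  classical
  set χα : Fin 3 → ℝ := fun j => if 0 < simpleRoot H j then (1 : ℝ) else 0 with hχα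
  set χϖ : Fin 3 → ℝ := fun j => if 0 < coweight H j then (1 : ℝ) else 0 with hχϖ
  have key : ∀ S₃ ∈ S₂.powerset,
      (-1 : ℝ) ^ (S₂.card - S₃.card) * (∏ j ∈ S₁ \ S₃, χα j) * (∏ j ∈ S₃, χϖ j)
      = (∏ j ∈ S₁ \ S₂, χα j) * ((∏ j ∈ S₃, χϖ j) * ∏ j ∈ S₂ \ S₃, -(χα j)) := by
    intro S₃ hS₃
    rw [Finset.mem_powerset] at hS₃
    have hsplit : S₁ \ S₃ = (S₁ \ S₂) ∪ (S₂ \ S₃) := by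
      ext j
      simp only [Finset.mem_sdiff, Finset.mem_union]
      constructor
      · rintro ⟨hj1, hj3⟩
        by_cases hj2 : j ∈ S₂
        · exact Or.inr ⟨hj2, hj3⟩
        · exact Or.inl ⟨hj1, hj2⟩
      · rintro (⟨hj1, hj2⟩ | ⟨hj2, hj3⟩)
        · exact ⟨hj1, fun hc => hj2 (hS₃ hc)⟩
        · exact ⟨hS hj2, hj3⟩
    have hdisj : Disjoint (S₁ \ S₂) (S₂ \ S₃) := by
      rw [Finset.disjoint_left]
      intro j hj hj'
      rw [Finset.mem_sdiff] at hj hj'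
      exact hj.2 hj'.1
    have hneg : ∏ j ∈ S₂ \ S₃, -(χα j) = (-1 : ℝ) ^ (S₂.card - S₃.card) * ∏ j ∈ S₂ \ S₃, χα j := by
      rw [← Finset.card_sdiff_of_subset hS₃]
      have hmm : ∀ j ∈ S₂ \ S₃, -(χα j) = (-1 : ℝ) * χα j := fun _ _ => by ring
      rw [Finset.prod_congr rfl hmm, Finset.prod_mul_distrib, Finset.prod_const]
    rw [hsplit, Finset.prod_union hdisj, hneg]
    ring
  rw [Finset.sum_congr rfl key, ← Finset.mul_sum, ← Finset.prod_add]
  by_cases hP : ∀ j ∈ S₁ \ S₂, 0 < simpleRoot H j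
  · have hnonneg : ∀ j, j ∉ S₂ →
        0 ≤ ![simpleRoot H 0, simpleRoot H 1, simpleRoot H 2] j := by
      intro j hj
      rw [vec_eq (simpleRoot H) j]
      by_cases hj1 : j ∈ S₁
      · exact le_of_lt (hP j (Finset.mem_sdiff.mpr ⟨hj1, hj⟩))
      · exact le_of_eq (hzero j hj1).symm
    have hcore := core (simpleRoot H 0) (simpleRoot H 1) (simpleRoot H 2)
      (coweight H 0) (coweight H 1) (coweight H 2)
      (cw0 H) (cw1 H) (cw2 H) S₂ hnonneg
    simp only [vec_eq (simpleRoot H), vec_eq (coweight H)] at hcore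
    calc (∏ j ∈ S₁ \ S₂, χα j) * ∏ j ∈ S₂, (χϖ j + -(χα j))
        = (∏ j ∈ S₁ \ S₂, χα j) *
            ∏ j ∈ S₂, ((if 0 < coweight H j then (1:ℝ) else 0) - (if 0 < simpleRoot H j then (1:ℝ) else 0)) := by
          simp only [hχα, hχϖ, sub_eq_add_neg]
      _ = _ := by rw [hcore]; ring
  · push_neg at hP
    obtain ⟨j₀, hj₀, hj₀'⟩ := hP
    have hz : χα j₀ = 0 := by simp [hχα, hj₀']
    rw [Finset.prod_eq_zero hj₀ hz]
    simp [Finset.prod_eq_zero hj₀ hz]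
end
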